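/- arXiv:1609.06913 — 5 statements merged into one kernel-verified Lean document; each statement's English description precedes it below -/
import Mathlib

section
/- Let W, X, Y, Z be Dedekind complete Riesz spaces and let B₀ : W → X be a positive regular operator. Then for all regular operators A, C : Y → Z, one has |M_{A,B₀}| = M_{|A|,B₀} and M_{A,B₀} ∨ M_{C,B₀} = M_{A∨C,B₀} in L^r(L^r(X,Y), L^r(W,Z)). -/
open Set Filter

namespace TwoSided

section Defs

variable {E F : Type*}
  [AddCommGroup E] [Lattice E] [Module ℝ E]
  [AddCommGroup F] [Lattice F] [Module ℝ F]

/-- A linear operator between ordered vector spaces is positive if it maps the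
positive cone into the positive cone. -/
def Positive (T : E →ₗ[ℝ] F) : Prop := ∀ x : E, 0 ≤ x → 0 ≤ T x

/-- A regular operator is a difference of two positive operators. -/
def IsRegular (T : E →ₗ[ℝ] F) : Prop :=
  ∃ P Q : E →ₗ[ℝ] F, Positive P ∧ Positive Q ∧ T = P - Q

/-- `U` is the supremum of `S` and `T` in the operator order. -/
def IsOpSup (S T U : E →ₗ[ℝ] F) : Prop :=
  Positive (U - S) ∧ Positive (U - T) ∧
    ∀ V : E →ₗ[ℝ] F, Positive (V - S) → Positive (V - T) → Positive (V - U)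

/-- `U` is the infimum of `S` and `T` in the operator order. -/
def IsOpInf (S T U : E →ₗ[ℝ] F) : Prop :=
  Positive (S - U) ∧ Positive (T - U) ∧
    ∀ V : E →ₗ[ℝ] F, Positive (S - V) → Positive (T - V) → Positive (U - V)

/-- `U` is the least upper bound of the set `s` of operators in the operator order. -/
def IsOpLUB (s : Set (E →ₗ[ℝ] F)) (U : E →ₗ[ℝ] F) : Prop :=
  (∀ C ∈ s, Positive (U - C)) ∧
    ∀ V : E →ₗ[ℝ] F, (∀ C ∈ s, Positive (V - C)) → Positive (V - U)

/-- `M` is the modulus `|T| = T ⊔ (-T)` of the operator `T`. -/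
def IsModulus (T M : E →ₗ[ℝ] F) : Prop := IsOpSup T (-T) M

/-- An operator is order continuous if it maps nets decreasing to `0`
to nets order converging to `0`. -/
def OrdContinuous (T : E →ₗ[ℝ] F) : Prop :=
  ∀ (ι : Type) [SemilatticeSup ι] [Nonempty ι] (a : ι → E),
    Antitone a → IsGLB (Set.range a) 0 →
      ∃ b : ι → F, Antitone b ∧ IsGLB (Set.range b) 0 ∧
        ∀ i, T (a i) ≤ b i ∧ -(T (a i)) ≤ b i

/-- A lattice is Dedekind complete if every nonempty set bounded above has a
least upper bound. -/
def DedekindComplete (G : Type*) [Preorder G] : Prop :=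
  ∀ s : Set G, s.Nonempty → BddAbove s → ∃ a, IsLUB s a

end Defs

section Two

variable {W X Y Z : Type*}
  [AddCommGroup W] [Lattice W] [Module ℝ W]
  [AddCommGroup X] [Lattice X] [Module ℝ X]
  [AddCommGroup Y] [Lattice Y] [Module ℝ Y]
  [AddCommGroup Z] [Lattice Z] [Module ℝ Z]

/-- The two-sided multiplication operator `T ↦ A ∘ T ∘ B`. -/
def MAB (A : Y →ₗ[ℝ] Z) (B : W →ₗ[ℝ] X) :
    (X →ₗ[ℝ] Y) →ₗ[ℝ] (W →ₗ[ℝ] Z) where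
  toFun T := A ∘ₗ T ∘ₗ B
  map_add' := by intro S T; ext w; simp
  map_smul' := by intro c T; ext w; simp

/-- Positivity for operators between spaces of operators, with respect to the
operator order. -/
def Positive2 (Φ : (X →ₗ[ℝ] Y) →ₗ[ℝ] (W →ₗ[ℝ] Z)) : Prop :=
  ∀ T : X →ₗ[ℝ] Y, Positive T → Positive (Φ T)

def IsRegular2 (Φ : (X →ₗ[ℝ] Y) →ₗ[ℝ] (W →ₗ[ℝ] Z)) : Prop :=
  ∃ Φ₁ Φ₂, Positive2 (W := W) (X := X) (Y := Y) (Z := Z) Φ₁ ∧ Positive2 Φ₂ ∧ Φ = Φ₁ - Φ₂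

def IsOpSup2 (Φ Ψ Θ : (X →ₗ[ℝ] Y) →ₗ[ℝ] (W →ₗ[ℝ] Z)) : Prop :=
  Positive2 (Θ - Φ) ∧ Positive2 (Θ - Ψ) ∧
    ∀ Ξ : (X →ₗ[ℝ] Y) →ₗ[ℝ] (W →ₗ[ℝ] Z),
      Positive2 (Ξ - Φ) → Positive2 (Ξ - Ψ) → Positive2 (Ξ - Θ)

def IsOpInf2 (Φ Ψ Θ : (X →ₗ[ℝ] Y) →ₗ[ℝ] (W →ₗ[ℝ] Z)) : Prop :=
  Positive2 (Φ - Θ) ∧ Positive2 (Ψ - Θ) ∧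
    ∀ Ξ : (X →ₗ[ℝ] Y) →ₗ[ℝ] (W →ₗ[ℝ] Z),
      Positive2 (Φ - Ξ) → Positive2 (Ψ - Ξ) → Positive2 (Θ - Ξ)

def IsModulus2 (Φ M : (X →ₗ[ℝ] Y) →ₗ[ℝ] (W →ₗ[ℝ] Z)) : Prop := IsOpSup2 Φ (-Φ) M

end Two

end TwoSided

/-!
Write `M_A` for `T ↦ A ∘ T ∘ B₀`. Since `B₀ ≥ 0`, `A ↦ M_A` is positive and linear, so `M_{A ∨ C}`
dominates `M_A` and `M_C`. For minimality, let `Ξ ≥ M_A, M_C`, `T ≥ 0`, `w ≥ 0` and `x = B₀ w`.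
By the Riesz–Kantorovich formula, `(A ∨ C)(T x)` is the supremum of `A y₁ + C y₂` over
`y₁, y₂ ≥ 0` with `y₁ + y₂ = T x`. Each such splitting comes from an operator `0 ≤ T₁ ≤ T` with
`T₁ x = y₁` (extend `c • x ↦ c • y₁` by Hahn–Banach–Kantorovich under the sublinear map
`u ↦ T u⁺`), so `A y₁ + C y₂ = M_A T₁ w + M_C (T - T₁) w ≤ Ξ T₁ w + Ξ (T - T₁) w = Ξ T w`.
The modulus is the case `C = -A`.
-/

namespace TwoSided

open scoped Pointwise

section Positive

variable {E F : Type*} [AddCommGroup E] [Lattice E] [Module ℝ E]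
  [AddCommGroup F] [Lattice F] [Module ℝ F]

theorem IsRegular.neg {T : E →ₗ[ℝ] F} (hT : IsRegular T) : IsRegular (-T) := by
  obtain ⟨P, Q, hP, hQ, rfl⟩ := hT
  exact ⟨Q, P, hQ, hP, neg_sub P Q⟩

theorem IsRegular.exists_positive_sub {T : E →ₗ[ℝ] F} (hT : IsRegular T) :
    ∃ P, Positive P ∧ Positive (P - T) := by
  obtain ⟨P, Q, hP, hQ, rfl⟩ := hT
  exact ⟨P, hP, by rwa [sub_sub_cancel]⟩

variable [AddLeftMono F]

theorem positive_sub_iff {S T : E →ₗ[ℝ] F} : Positive (T - S) ↔ ∀ x, 0 ≤ x → S x ≤ T x := by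
  simp only [Positive, LinearMap.sub_apply, sub_nonneg]

theorem Positive.add {S T : E →ₗ[ℝ] F} (hS : Positive S) (hT : Positive T) :
    Positive (S + T) :=
  fun x hx => add_nonneg (hS x hx) (hT x hx)

theorem Positive.monotone [AddLeftMono E] {T : E →ₗ[ℝ] F} (hT : Positive T) : Monotone T :=
  fun a b hab => by simpa using hT (b - a) (sub_nonneg.2 hab)

end Positive

theorem exists_add_eq_of_le_add {E : Type*} [AddCommGroup E] [Lattice E] [AddLeftMono E]
    {y y' z : E} (hy : 0 ≤ y) (hy' : 0 ≤ y') (hz : 0 ≤ z) (hzy : z ≤ y + y') :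
    ∃ u u', 0 ≤ u ∧ 0 ≤ u' ∧ u ≤ y ∧ u' ≤ y' ∧ u + u' = z := by
  refine ⟨z ⊓ y, z - z ⊓ y, le_inf hz hy, sub_nonneg.2 inf_le_left, inf_le_right, ?_,
    add_sub_cancel _ _⟩
  rw [sub_inf]
  exact sup_le (by simpa using hy') (sub_le_iff_le_add'.2 hzy)

section Extension

variable {E F : Type*} [AddCommGroup E] [Lattice E] [AddLeftMono E] [Module ℝ E]
  [PosSMulMono ℝ E] [AddCommGroup F] [Module ℝ F]

theorem exists_linearMap_eq_of_additive_on_nonneg (v : E → F)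
    (hadd : ∀ y z, 0 ≤ y → 0 ≤ z → v (y + z) = v y + v z)
    (hsmul : ∀ r : ℝ, 0 < r → ∀ y, 0 ≤ y → v (r • y) = r • v y) :
    ∃ V : E →ₗ[ℝ] F, ∀ y, 0 ≤ y → V y = v y := by
  have hv0 : v 0 = 0 := by simpa using hadd 0 0 le_rfl le_rfl
  have hdiff : ∀ a b, 0 ≤ a → 0 ≤ b → v (a - b)⁺ - v (a - b)⁻ = v a - v b := by
    intro a b ha hb
    have h : (a - b)⁺ + b = a + (a - b)⁻ := by
      rw [← sub_eq_sub_iff_add_eq_add, posPart_sub_negPart]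
    rw [sub_eq_sub_iff_add_eq_add, ← hadd _ _ (posPart_nonneg _) hb, h,
      hadd _ _ ha (negPart_nonneg _)]
  have hpos := posPart_nonneg (α := E)
  have hneg := negPart_nonneg (α := E)
  refine ⟨{ toFun y := v y⁺ - v (y⁻), map_add' y z := ?_, map_smul' r y := ?_ },
    fun y hy => ?_⟩
  · have h := hdiff (y⁺ + z⁺) (y⁻ + z⁻) (add_nonneg (hpos y) (hpos z))
      (add_nonneg (hneg y) (hneg z))
    rw [add_sub_add_comm, posPart_sub_negPart, posPart_sub_negPart] at h
    simp only [h, hadd _ _ (hpos y) (hpos z), hadd _ _ (hneg y) (hneg z)]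
    abel
  · rcases lt_trichotomy r 0 with hr | rfl | hr
    · have h := hdiff ((-r) • y⁻) ((-r) • y⁺) (smul_nonneg (neg_nonneg.2 hr.le) (hneg y))
        (smul_nonneg (neg_nonneg.2 hr.le) (hpos y))
      rw [← smul_sub, neg_smul, ← smul_neg, neg_sub, posPart_sub_negPart,
        hsmul _ (neg_pos.2 hr) _ (hneg y), hsmul _ (neg_pos.2 hr) _ (hpos y)] at h
      rw [h, RingHom.id_apply, neg_smul, neg_smul, smul_sub]
      abel
    · simp
    · have h := hdiff (r • y⁺) (r • y⁻) (smul_nonneg hr.le (hpos y)) (smul_nonneg hr.le (hneg y))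
      rw [← smul_sub, posPart_sub_negPart, hsmul r hr _ (hpos y), hsmul r hr _ (hneg y)] at h
      simp only [h, RingHom.id_apply, smul_sub]
  · simp [posPart_eq_self.2 hy, negPart_eq_zero.2 hy, hv0]

end Extension

section RieszKantorovich

variable {E F : Type*} [AddCommGroup E] [Lattice E] [Module ℝ E] [AddCommGroup F] [Module ℝ F]
  {A C : E →ₗ[ℝ] F}

/-- By the Riesz–Kantorovich formula, `(A ⊔ C) y` is the supremum of this set for `y ≥ 0`. -/
def rkSet (A C : E →ₗ[ℝ] F) (y : E) : Set F :=
  {z | ∃ y₁ y₂, 0 ≤ y₁ ∧ 0 ≤ y₂ ∧ y₁ + y₂ = y ∧ A y₁ + C y₂ = z}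

theorem mem_rkSet_left {y : E} (hy : 0 ≤ y) : A y ∈ rkSet A C y :=
  ⟨y, 0, hy, le_rfl, add_zero y, by simp⟩

theorem mem_rkSet_right {y : E} (hy : 0 ≤ y) : C y ∈ rkSet A C y :=
  ⟨0, y, le_rfl, hy, zero_add y, by simp⟩

theorem rkSet_smul [PosSMulMono ℝ E] {r : ℝ} (hr : 0 < r) (y : E) :
    rkSet A C (r • y) = r • rkSet A C y := by
  ext w
  rw [Set.mem_smul_set]
  constructor
  · rintro ⟨p, q, hp, hq, hpq, rfl⟩
    refine ⟨A (r⁻¹ • p) + C (r⁻¹ • q), ⟨r⁻¹ • p, r⁻¹ • q, smul_nonneg (by positivity) hp,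
      smul_nonneg (by positivity) hq, ?_, rfl⟩, ?_⟩
    · rw [← smul_add, hpq, inv_smul_smul₀ hr.ne']
    · simp [smul_inv_smul₀ hr.ne']
  · rintro ⟨_, ⟨y₁, y₂, h₁, h₂, rfl, rfl⟩, rfl⟩
    exact ⟨r • y₁, r • y₂, smul_nonneg hr.le h₁, smul_nonneg hr.le h₂, (smul_add r y₁ y₂).symm,
      by simp⟩

theorem rkSet_add [AddLeftMono E] {y z : E} (hy : 0 ≤ y) (hz : 0 ≤ z) :
    rkSet A C (y + z) = rkSet A C y + rkSet A C z := by
  ext w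
  constructor
  · rintro ⟨p, q, hp, hq, hpq, rfl⟩
    obtain ⟨u, u', hu, hu', huy, hu'z, rfl⟩ :=
      exists_add_eq_of_le_add hy hz hp (hpq ▸ le_add_of_nonneg_right hq)
    have hq' : q = (y - u) + (z - u') := by rw [eq_sub_of_add_eq' hpq]; abel
    refine ⟨A u + C (y - u), ⟨u, y - u, hu, sub_nonneg.2 huy, add_sub_cancel u y, rfl⟩,
      A u' + C (z - u'), ⟨u', z - u', hu', sub_nonneg.2 hu'z, add_sub_cancel u' z, rfl⟩, ?_⟩
    rw [hq', map_add, map_add]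
    exact add_add_add_comm _ _ _ _
  · rintro ⟨_, ⟨y₁, y₂, h₁, h₂, rfl, rfl⟩, _, ⟨z₁, z₂, h₃, h₄, rfl, rfl⟩, rfl⟩
    refine ⟨y₁ + z₁, y₂ + z₂, add_nonneg h₁ h₃, add_nonneg h₂ h₄, add_add_add_comm _ _ _ _, ?_⟩
    rw [map_add, map_add]
    exact add_add_add_comm _ _ _ _

variable [Lattice F] [AddLeftMono F]

theorem apply_mem_upperBounds_rkSet {U : E →ₗ[ℝ] F} (hUA : Positive (U - A))
    (hUC : Positive (U - C)) (y : E) : U y ∈ upperBounds (rkSet A C y) := by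
  rintro _ ⟨y₁, y₂, h₁, h₂, rfl, rfl⟩
  rw [map_add]
  exact add_le_add (positive_sub_iff.1 hUA y₁ h₁) (positive_sub_iff.1 hUC y₂ h₂)

theorem bddAbove_rkSet (hA : IsRegular A) (hC : IsRegular C) (y : E) :
    BddAbove (rkSet A C y) := by
  obtain ⟨P, hP, hPA⟩ := hA.exists_positive_sub
  obtain ⟨Q, hQ, hQC⟩ := hC.exists_positive_sub
  refine ⟨(P + Q) y, apply_mem_upperBounds_rkSet ?_ ?_ y⟩
  · simpa [add_sub_right_comm] using hPA.add hQ
  · simpa [add_sub_assoc] using hP.add hQC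

variable [AddLeftMono E] [PosSMulMono ℝ E] [PosSMulMono ℝ F]

theorem exists_isOpSup_isLUB_rkSet (hF : DedekindComplete F) (hA : IsRegular A)
    (hC : IsRegular C) :
    ∃ V, IsOpSup A C V ∧ ∀ y, 0 ≤ y → IsLUB (rkSet A C y) (V y) := by
  have hex : ∀ y : E, ∃ b, 0 ≤ y → IsLUB (rkSet A C y) b := fun y => by
    by_cases hy : 0 ≤ y
    · obtain ⟨b, hb⟩ := hF _ ⟨_, mem_rkSet_left hy⟩ (bddAbove_rkSet hA hC y)
      exact ⟨b, fun _ => hb⟩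
    · exact ⟨0, fun h => absurd h hy⟩
  choose v hv using hex
  obtain ⟨V, hV⟩ := exists_linearMap_eq_of_additive_on_nonneg v
    (fun y z hy hz => (hv _ (add_nonneg hy hz)).unique <| by
      rw [rkSet_add hy hz]; exact (hv y hy).add (hv z hz))
    (fun r hr y hy => (hv _ (smul_nonneg hr.le hy)).unique <| by
      rw [rkSet_smul hr, ← Set.image_smul]
      exact (OrderIso.smulRight hr).isLUB_image'.2 (hv y hy))
  have hVv : ∀ y, 0 ≤ y → IsLUB (rkSet A C y) (V y) := fun y hy => hV y hy ▸ hv y hy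
  refine ⟨V, ⟨?_, ?_, fun U hUA hUC => ?_⟩, hVv⟩
  · exact positive_sub_iff.2 fun y hy => (hVv y hy).1 (mem_rkSet_left hy)
  · exact positive_sub_iff.2 fun y hy => (hVv y hy).1 (mem_rkSet_right hy)
  · exact positive_sub_iff.2 fun y hy => (hVv y hy).2 (apply_mem_upperBounds_rkSet hUA hUC y)

theorem IsOpSup.isLUB_rkSet (hF : DedekindComplete F) (hA : IsRegular A) (hC : IsRegular C)
    {S : E →ₗ[ℝ] F} (hS : IsOpSup A C S) {y : E} (hy : 0 ≤ y) :
    IsLUB (rkSet A C y) (S y) := by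
  obtain ⟨V, hV, hVlub⟩ := exists_isOpSup_isLUB_rkSet hF hA hC
  refine ⟨apply_mem_upperBounds_rkSet hS.1 hS.2.1 y, fun b hb => ?_⟩
  exact (positive_sub_iff.1 (hS.2.2 V hV.1 hV.2.1) y hy).trans ((hVlub y hy).2 hb)

end RieszKantorovich

section HahnBanachKantorovich

variable {E F : Type*} [AddCommGroup E] [Module ℝ E] [AddCommGroup F] [Lattice F]
  [AddLeftMono F] [Module ℝ F] [PosSMulMono ℝ F] {p : E → F}

theorem supSpanSingleton_le_sublinear
    (hp_smul : ∀ r : ℝ, 0 < r → ∀ u, p (r • u) = r • p u)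
    {f : E →ₗ.[ℝ] F} (hf : ∀ u : f.domain, f u ≤ p u) {x₀ : E} (hx₀ : x₀ ∉ f.domain) {c : F}
    (hc_ge : ∀ u : f.domain, f u - p (u - x₀) ≤ c) (hc_le : ∀ u : f.domain, c ≤ p (u + x₀) - f u)
    (z : (f.supSpanSingleton x₀ c hx₀).domain) : f.supSpanSingleton x₀ c hx₀ z ≤ p z := by
  obtain ⟨z, hz⟩ := z
  obtain ⟨x, hx, _, hy, rfl⟩ := Submodule.mem_sup.1 hz
  obtain ⟨r, rfl⟩ := Submodule.mem_span_singleton.1 hy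
  rw [LinearPMap.supSpanSingleton_apply_mk _ _ _ _ _ hx]
  rcases lt_trichotomy r 0 with hr | rfl | hr
  · obtain ⟨s, hs, rfl⟩ : ∃ s, 0 < s ∧ r = -s := ⟨-r, neg_pos.2 hr, (neg_neg r).symm⟩
    have h := smul_le_smul_of_nonneg_left (hc_ge (s⁻¹ • ⟨x, hx⟩)) hs.le
    rw [smul_sub, f.map_smul, smul_inv_smul₀ hs.ne', SetLike.val_smul, ← hp_smul _ hs, smul_sub,
      smul_inv_smul₀ hs.ne'] at h
    simpa [neg_smul, ← sub_eq_add_neg] using sub_le_comm.1 h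
  · simpa using hf ⟨x, hx⟩
  · have h := smul_le_smul_of_nonneg_left (hc_le (r⁻¹ • ⟨x, hx⟩)) hr.le
    rw [smul_sub, f.map_smul, smul_inv_smul₀ hr.ne', SetLike.val_smul, ← hp_smul _ hr, smul_add,
      smul_inv_smul₀ hr.ne'] at h
    exact le_sub_iff_add_le'.1 h

variable (hF : DedekindComplete F) (hp_add : ∀ u v, p (u + v) ≤ p u + p v)
  (hp_smul : ∀ r : ℝ, 0 < r → ∀ u, p (r • u) = r • p u)
include hF hp_add hp_smul

theorem exists_lt_le_sublinear {f : E →ₗ.[ℝ] F} (hf : ∀ u : f.domain, f u ≤ p u)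
    (hdom : f.domain ≠ ⊤) : ∃ g : E →ₗ.[ℝ] F, f < g ∧ ∀ u : g.domain, g u ≤ p u := by
  obtain ⟨x₀, -, hx₀⟩ := SetLike.exists_of_lt (lt_top_iff_ne_top.2 hdom)
  have key : ∀ u v : f.domain, f u - p (u - x₀) ≤ p (v + x₀) - f v := fun u v => by
    rw [sub_le_sub_iff, ← f.map_add]
    calc f (u + v) ≤ p (u + v) := hf (u + v)
      _ = p ((v + x₀) + (u - x₀)) := by congr 1; abel
      _ ≤ p (v + x₀) + p (u - x₀) := hp_add _ _
  obtain ⟨c, hc⟩ := hF (Set.range fun u : f.domain => f u - p (u - x₀)) ⟨_, ⟨0, rfl⟩⟩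
    ⟨p ((0 : f.domain) + x₀) - f 0, by rintro _ ⟨u, rfl⟩; exact key u 0⟩
  refine ⟨f.supSpanSingleton x₀ c hx₀, lt_of_le_of_ne (f.left_le_sup _ _) fun h => hx₀ ?_,
    supSpanSingleton_le_sublinear hp_smul hf hx₀ (fun u => hc.1 ⟨u, rfl⟩)
      fun v => hc.2 <| by rintro _ ⟨u, rfl⟩; exact key u v⟩
  rw [h, LinearPMap.domain_supSpanSingleton]
  exact Submodule.mem_sup_right (Submodule.mem_span_singleton_self x₀)

theorem exists_extension_of_le_sublinear_of_dedekindComplete (f : E →ₗ.[ℝ] F)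
    (hf : ∀ u : f.domain, f u ≤ p u) :
    ∃ g : E →ₗ[ℝ] F, (∀ u : f.domain, g u = f u) ∧ ∀ u, g u ≤ p u := by
  set S := {h : E →ₗ.[ℝ] F | ∀ u : h.domain, h u ≤ p u}
  have hS : ∀ c ⊆ S, IsChain (· ≤ ·) c → ∀ y ∈ c, ∃ ub ∈ S, ∀ z ∈ c, z ≤ ub := by
    intro c hcS hc y hy
    have hcd : DirectedOn (· ≤ ·) c := hc.directedOn
    refine ⟨LinearPMap.sSup c hcd, ?_, fun _ hz => LinearPMap.le_sSup hcd hz⟩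
    rintro ⟨x, hx⟩
    have hdir : DirectedOn (· ≤ ·) (LinearPMap.domain '' c) :=
      directedOn_image.2 (hcd.mono @(LinearPMap.domain_mono.monotone))
    obtain ⟨_, ⟨g, hgc, rfl⟩, hgx⟩ :=
      (Submodule.mem_sSup_of_directed (Set.Nonempty.image _ ⟨y, hy⟩) hdir).1 hx
    rw [← (LinearPMap.le_sSup hcd hgc).2 (x := ⟨x, hgx⟩) rfl]
    exact hcS hgc ⟨x, hgx⟩
  obtain ⟨q, hfq, hq⟩ := zorn_le_nonempty₀ S hS f hf
  have hqtop : q.domain = ⊤ := by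
    by_contra hne
    obtain ⟨r, hqr, hr⟩ := exists_lt_le_sublinear hF hp_add hp_smul hq.prop hne
    exact hqr.not_ge (hq.2 hr hqr.le)
  let g : E →ₗ[ℝ] F := q.toFun ∘ₗ LinearMap.id.codRestrict q.domain (by simp [hqtop])
  refine ⟨g, fun u => (hfq.2 rfl).symm, fun u => hq.prop ⟨u, by simp [hqtop]⟩⟩

end HahnBanachKantorovich

section Interpolation

variable {E F : Type*} [AddCommGroup E] [Lattice E] [AddLeftMono E] [Module ℝ E]
  [PosSMulMono ℝ E] [AddCommGroup F] [Lattice F] [AddLeftMono F] [Module ℝ F] [PosSMulMono ℝ F]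

theorem exists_positive_le_apply_eq (hF : DedekindComplete F) {T : E →ₗ[ℝ] F}
    (hT : Positive T) {x : E} (hx : 0 ≤ x) {y : F} (hy : 0 ≤ y) (hyx : y ≤ T x) :
    ∃ S : E →ₗ[ℝ] F, Positive S ∧ Positive (T - S) ∧ S x = y := by
  have hp_add : ∀ u v : E, T (u + v)⁺ ≤ T u⁺ + T v⁺ := fun u v => by
    rw [← map_add]
    exact hT.monotone (sup_le (add_le_add (le_posPart u) (le_posPart v))
      (add_nonneg (posPart_nonneg u) (posPart_nonneg v)))
  have hp_smul : ∀ r : ℝ, 0 < r → ∀ u : E, T (r • u)⁺ = r • T u⁺ := fun r hr u => by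
    have h := (OrderIso.smulRight hr).map_sup u 0
    simp only [OrderIso.smulRight_apply, smul_zero] at h
    rw [posPart_def, posPart_def, ← h, map_smul]
  have hxy : ∀ c : ℝ, c • x = 0 → RingHom.id ℝ c • y = 0 := fun c hc => by
    rw [RingHom.id_apply]
    rcases smul_eq_zero.1 hc with rfl | rfl
    · simp
    · simp [le_antisymm (by simpa using hyx) hy]
  let f := LinearPMap.mkSpanSingleton' x y hxy
  have hf : ∀ u : f.domain, f u ≤ T (u : E)⁺ := by
    rintro ⟨_, hu⟩
    obtain ⟨c, rfl⟩ := Submodule.mem_span_singleton.1 hu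
    rw [LinearPMap.mkSpanSingleton'_apply, RingHom.id_apply]
    rcases le_total 0 c with hc | hc
    · rw [posPart_eq_self.2 (smul_nonneg hc hx), map_smul]
      exact smul_le_smul_of_nonneg_left hyx hc
    · have hcy : c • y ≤ 0 := by simpa using neg_nonpos.2 (smul_nonneg (neg_nonneg.2 hc) hy)
      exact hcy.trans (hT _ (posPart_nonneg _))
  obtain ⟨S, hSf, hST⟩ := exists_extension_of_le_sublinear_of_dedekindComplete
    (p := fun u => T u⁺) hF hp_add hp_smul f hf
  refine ⟨S, fun u hu => ?_, positive_sub_iff.2 fun u hu => ?_, ?_⟩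
  · simpa [posPart_eq_zero.2 (neg_nonpos.2 hu)] using hST (-u)
  · simpa [posPart_eq_self.2 hu] using hST u
  · rw [hSf ⟨x, Submodule.mem_span_singleton_self x⟩]
    exact LinearPMap.mkSpanSingleton'_apply_self x y hxy _

variable {G : Type*} [AddCommGroup G] [Module ℝ G]

theorem exists_of_mem_rkSet_apply (hF : DedekindComplete F) {T : E →ₗ[ℝ] F} (hT : Positive T)
    {x : E} (hx : 0 ≤ x) {A C : F →ₗ[ℝ] G} {z : G} (hz : z ∈ rkSet A C (T x)) :
    ∃ T₁, Positive T₁ ∧ Positive (T - T₁) ∧ A (T₁ x) + C ((T - T₁) x) = z := by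
  obtain ⟨y₁, y₂, hy₁, hy₂, hy, rfl⟩ := hz
  obtain ⟨T₁, hT₁, hTT₁, hT₁x⟩ :=
    exists_positive_le_apply_eq hF hT hx hy₁ (hy ▸ le_add_of_nonneg_right hy₂)
  refine ⟨T₁, hT₁, hTT₁, ?_⟩
  rw [LinearMap.sub_apply, hT₁x, ← hy, add_sub_cancel_left]

end Interpolation

section TwoSidedMultiplication

variable {W X Y Z : Type*} [AddCommGroup W] [Module ℝ W] [AddCommGroup X] [Module ℝ X]
  [AddCommGroup Y] [Module ℝ Y] [AddCommGroup Z] [Module ℝ Z]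

theorem MAB_sub_left (A C : Y →ₗ[ℝ] Z) (B : W →ₗ[ℝ] X) : MAB (A - C) B = MAB A B - MAB C B :=
  rfl

theorem MAB_neg_left (A : Y →ₗ[ℝ] Z) (B : W →ₗ[ℝ] X) : MAB (-A) B = -MAB A B :=
  rfl

variable [Lattice W] [Lattice X] [Lattice Y] [Lattice Z]

theorem Positive.positive2_MAB {A : Y →ₗ[ℝ] Z} {B : W →ₗ[ℝ] X} (hA : Positive A)
    (hB : Positive B) : Positive2 (MAB A B) :=
  fun _ hT w hw => hA _ (hT _ (hB w hw))

variable [AddLeftMono Z]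

theorem positive2_sub_iff {Φ Ψ : (X →ₗ[ℝ] Y) →ₗ[ℝ] (W →ₗ[ℝ] Z)} :
    Positive2 (Ψ - Φ) ↔ ∀ T, Positive T → ∀ w, 0 ≤ w → Φ T w ≤ Ψ T w := by
  simp only [Positive2, LinearMap.sub_apply, positive_sub_iff]

variable [AddLeftMono X] [PosSMulMono ℝ X] [AddLeftMono Y] [PosSMulMono ℝ Y] [PosSMulMono ℝ Z]

theorem IsOpSup.isOpSup2_MAB (hY : DedekindComplete Y) (hZ : DedekindComplete Z)
    {A C S : Y →ₗ[ℝ] Z} (hA : IsRegular A) (hC : IsRegular C) (hS : IsOpSup A C S)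
    {B : W →ₗ[ℝ] X} (hB : Positive B) : IsOpSup2 (MAB A B) (MAB C B) (MAB S B) := by
  refine ⟨MAB_sub_left S A B ▸ hS.1.positive2_MAB hB, MAB_sub_left S C B ▸ hS.2.1.positive2_MAB hB,
    fun Ξ hΞA hΞC => positive2_sub_iff.2 fun T hT w hw => ?_⟩
  refine (hS.isLUB_rkSet hZ hA hC (hT _ (hB w hw))).2 fun z hz => ?_
  obtain ⟨T₁, hT₁, hTT₁, rfl⟩ := exists_of_mem_rkSet_apply hY hT (hB w hw) hz
  calc A (T₁ (B w)) + C ((T - T₁) (B w))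
      ≤ Ξ T₁ w + Ξ (T - T₁) w :=
        add_le_add (positive2_sub_iff.1 hΞA T₁ hT₁ w hw) (positive2_sub_iff.1 hΞC _ hTT₁ w hw)
    _ = Ξ T w := by rw [← LinearMap.add_apply, ← map_add, add_sub_cancel]

end TwoSidedMultiplication

end TwoSided

open TwoSided in
theorem statement2_general {W X Y Z : Type*}
    [AddCommGroup W] [Lattice W] [Module ℝ W]
    [AddCommGroup X] [Lattice X] [CovariantClass X X (· + ·) (· ≤ ·)]
    [Module ℝ X] [PosSMulMono ℝ X]
    [AddCommGroup Y] [Lattice Y] [CovariantClass Y Y (· + ·) (· ≤ ·)]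
    [Module ℝ Y] [PosSMulMono ℝ Y]
    [AddCommGroup Z] [Lattice Z] [CovariantClass Z Z (· + ·) (· ≤ ·)]
    [Module ℝ Z] [PosSMulMono ℝ Z]
    (hY : DedekindComplete Y) (hZ : DedekindComplete Z)
    (B₀ : W →ₗ[ℝ] X) (hB₀ : Positive B₀) :
    (∀ (A absA : Y →ₗ[ℝ] Z), IsRegular A → IsModulus A absA →
      IsModulus2 (MAB A B₀) (MAB absA B₀)) ∧
    (∀ (A C S : Y →ₗ[ℝ] Z), IsRegular A → IsRegular C → IsOpSup A C S →
      IsOpSup2 (MAB A B₀) (MAB C B₀) (MAB S B₀)) := by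
  refine ⟨fun A absA hA habs => ?_, fun A C S hA hC hS => hS.isOpSup2_MAB hY hZ hA hC hB₀⟩
  have h := habs.isOpSup2_MAB hY hZ hA hA.neg hB₀
  rwa [MAB_neg_left] at h

open TwoSided in
theorem statement2 {W X Y Z : Type*}
    [AddCommGroup W] [Lattice W] [CovariantClass W W (· + ·) (· ≤ ·)]
    [Module ℝ W] [PosSMulMono ℝ W]
    [AddCommGroup X] [Lattice X] [CovariantClass X X (· + ·) (· ≤ ·)]
    [Module ℝ X] [PosSMulMono ℝ X]
    [AddCommGroup Y] [Lattice Y] [CovariantClass Y Y (· + ·) (· ≤ ·)]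
    [Module ℝ Y] [PosSMulMono ℝ Y]
    [AddCommGroup Z] [Lattice Z] [CovariantClass Z Z (· + ·) (· ≤ ·)]
    [Module ℝ Z] [PosSMulMono ℝ Z]
    (hW : DedekindComplete W) (hX : DedekindComplete X)
    (hY : DedekindComplete Y) (hZ : DedekindComplete Z)
    (B₀ : W →ₗ[ℝ] X) (hB₀ : Positive B₀) :
    (∀ (A absA : Y →ₗ[ℝ] Z), IsRegular A → IsModulus A absA →
      IsModulus2 (MAB A B₀) (MAB absA B₀)) ∧
    (∀ (A C S : Y →ₗ[ℝ] Z), IsRegular A → IsRegular C → IsOpSup A C S →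
      IsOpSup2 (MAB A B₀) (MAB C B₀) (MAB S B₀)) :=
  statement2_general hY hZ B₀ hB₀
end

section
/- Let W, X be Riesz spaces with X Dedekind complete, let B : W → X be a regular operator, and let w ∈ W⁺. Then the net of sums ∑_{i=1}^n |B w_i|, indexed over finite positive partitions (w_i)_{i=1}^n of w (i.e., w_i ≥ 0 and ∑ w_i = w), directed upward by refinement, increases to |B|w; in particular |B|w = sup { ∑_{i=1}^n |B w_i| : n ∈ ℕ, w_i ≥ 0, ∑ w_i = w }. -/
open Set Filter

/-!
Write `S x` for the set of sums `∑ |B xᵢ|` over finite positive partitions of `x ≥ 0`.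
Every such sum is at most `|B| x`, so by Dedekind completeness `S x` has a supremum `f x`.
By the Riesz decomposition property any two partitions have a common refinement, which can only
increase the sum (`|B (∑ uⱼ)| ≤ ∑ |B uⱼ|`); this makes `S x` directed and `f` additive on the
positive cone. Being also positively homogeneous, `f` extends by `x ↦ f x⁺ - f x⁻` to a linear
operator `U ≥ ±B`, whence `|B| ≤ U`, i.e. `|B| x ≤ f x`.
-/

section RieszDecomposition

variable {G : Type*} [AddCommGroup G] [Lattice G] [IsOrderedAddMonoid G]

theorem exists_add_eq_of_le_add {z a b : G} (hz : 0 ≤ z) (ha : 0 ≤ a) (hb : 0 ≤ b)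
    (h : z ≤ a + b) : ∃ z₁ z₂, 0 ≤ z₁ ∧ z₁ ≤ a ∧ 0 ≤ z₂ ∧ z₂ ≤ b ∧ z₁ + z₂ = z := by
  refine ⟨z ⊓ a, z - z ⊓ a, le_inf hz ha, inf_le_right, sub_nonneg.2 inf_le_left, ?_,
    add_sub_cancel _ _⟩
  rw [sub_inf, sub_self]
  exact sup_le hb (sub_le_iff_le_add'.2 h)

theorem exists_sum_eq_of_le_sum {n : ℕ} {v : Fin n → G} (hv : ∀ j, 0 ≤ v j) {a : G}
    (ha : 0 ≤ a) (h : a ≤ ∑ j, v j) :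
    ∃ u : Fin n → G, (∀ j, 0 ≤ u j) ∧ (∀ j, u j ≤ v j) ∧ ∑ j, u j = a := by
  induction n generalizing a with
  | zero => exact ⟨finZeroElim, finZeroElim, finZeroElim, (le_antisymm (by simpa using h) ha).symm⟩
  | succ n ih =>
    rw [Fin.sum_univ_succ] at h
    obtain ⟨a₀, a', ha₀, ha₀v, ha', ha'v, rfl⟩ :=
      exists_add_eq_of_le_add ha (hv 0) (Finset.sum_nonneg fun j _ => hv j.succ) h
    obtain ⟨u, hu, huv, rfl⟩ := ih (fun j => hv j.succ) ha' ha'v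
    exact ⟨Fin.cons a₀ u, Fin.cases ha₀ hu, Fin.cases ha₀v huv, by simp [Fin.sum_univ_succ]⟩

theorem exists_refinement {n m : ℕ} {w : Fin n → G} {v : Fin m → G} (hw : ∀ i, 0 ≤ w i)
    (hv : ∀ j, 0 ≤ v j) (h : ∑ i, w i = ∑ j, v j) :
    ∃ u : Fin n → Fin m → G, (∀ i j, 0 ≤ u i j) ∧ (∀ i, ∑ j, u i j = w i) ∧
      ∀ j, ∑ i, u i j = v j := by
  induction n generalizing v with
  | zero =>
    refine ⟨finZeroElim, finZeroElim, finZeroElim, fun j => ?_⟩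
    rw [Finset.univ_eq_empty, Finset.sum_empty, eq_comm,
      Finset.sum_eq_zero_iff_of_nonneg fun j _ => hv j] at h
    simp [h j (Finset.mem_univ j)]
  | succ n ih =>
    rw [Fin.sum_univ_succ] at h
    obtain ⟨r, hr, hrv, hr_sum⟩ := exists_sum_eq_of_le_sum hv (hw 0)
      (h ▸ le_add_of_nonneg_right (Finset.sum_nonneg fun i _ => hw i.succ))
    obtain ⟨u, hu, hu_row, hu_col⟩ := ih (fun i => hw i.succ) (v := fun j => v j - r j)
      (fun j => sub_nonneg.2 (hrv j)) (by rw [Finset.sum_sub_distrib, hr_sum, ← h]; abel)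
    refine ⟨Fin.cons r u, Fin.cases hr hu, Fin.cases hr_sum hu_row, fun j => ?_⟩
    simp [Fin.sum_univ_succ, hu_col]

end RieszDecomposition

theorem abs_smul_of_nonneg {𝕜 M : Type*} [Field 𝕜] [LinearOrder 𝕜] [IsStrictOrderedRing 𝕜]
    [AddCommGroup M] [Lattice M] [Module 𝕜 M] [PosSMulMono 𝕜 M] {c : 𝕜} (hc : 0 ≤ c) (y : M) :
    |c • y| = c • |y| := by
  rcases hc.eq_or_lt with rfl | hc
  · simp [abs]
  · change c • y ⊔ -(c • y) = c • (y ⊔ -y)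
    rw [← smul_neg]
    exact ((OrderIso.smulRight hc).map_sup y (-y)).symm

section Extension

variable {E F : Type*} [AddCommGroup E] [Lattice E] [IsOrderedAddMonoid E] [Module ℝ E]
  [PosSMulMono ℝ E] [AddCommGroup F] [Module ℝ F] {f : E → F}

theorem exists_linearMap_eq_of_nonneg
    (hadd : ∀ x y, 0 ≤ x → 0 ≤ y → f (x + y) = f x + f y)
    (hsmul : ∀ c : ℝ, 0 < c → ∀ x, 0 ≤ x → f (c • x) = c • f x) :
    ∃ U : E →ₗ[ℝ] F, ∀ x, 0 ≤ x → U x = f x := by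
  have hparts : ∀ {x a b : E}, 0 ≤ a → 0 ≤ b → x = a - b → f x⁺ - f x⁻ = f a - f b := by
    intro x a b ha hb hx
    have h : f (x⁺ + b) = f (a + x⁻) := by
      congr 1
      rw [← sub_eq_sub_iff_add_eq_add, posPart_sub_negPart, hx]
    rw [hadd _ _ (posPart_nonneg x) hb, hadd _ _ ha (negPart_nonneg x)] at h
    rw [sub_eq_sub_iff_add_eq_add, h]
  have hzero : f 0 = 0 := by simpa using hadd 0 0 le_rfl le_rfl
  replace hsmul : ∀ c : ℝ, 0 ≤ c → ∀ x, 0 ≤ x → f (c • x) = c • f x := by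
    intro c hc x hx
    rcases hc.eq_or_lt with rfl | hc
    · simp [hzero]
    · exact hsmul c hc x hx
  refine ⟨{ toFun := fun x => f x⁺ - f x⁻, map_add' := fun x y => ?_, map_smul' := fun c x => ?_ },
    fun x hx => ?_⟩
  · rw [hparts (add_nonneg (posPart_nonneg x) (posPart_nonneg y))
        (add_nonneg (negPart_nonneg x) (negPart_nonneg y))
        (by rw [add_sub_add_comm, posPart_sub_negPart, posPart_sub_negPart]),
      hadd _ _ (posPart_nonneg x) (posPart_nonneg y),
      hadd _ _ (negPart_nonneg x) (negPart_nonneg y)]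
    abel
  · rw [RingHom.id_apply]
    rcases le_total 0 c with hc | hc
    · rw [hparts (smul_nonneg hc (posPart_nonneg x)) (smul_nonneg hc (negPart_nonneg x))
          (by rw [← smul_sub, posPart_sub_negPart]),
        hsmul c hc _ (posPart_nonneg x), hsmul c hc _ (negPart_nonneg x), smul_sub]
    · have hc' : 0 ≤ -c := neg_nonneg.2 hc
      rw [hparts (smul_nonneg hc' (negPart_nonneg x)) (smul_nonneg hc' (posPart_nonneg x))
          (by rw [← smul_sub, neg_smul, ← smul_neg, neg_sub, posPart_sub_negPart]),
        hsmul _ hc' _ (posPart_nonneg x), hsmul _ hc' _ (negPart_nonneg x), neg_smul, neg_smul,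
        smul_sub]
      abel
  · change f x⁺ - f x⁻ = f x
    rw [hparts hx le_rfl (sub_zero x).symm, hzero, sub_zero]

end Extension

theorem sum_abs_map_le_sum_sum_abs_map {M N F ι κ : Type*} [AddCommGroup M] [AddCommGroup N]
    [Lattice N] [IsOrderedAddMonoid N] [FunLike F M N] [AddMonoidHomClass F M N] [Fintype ι]
    [Fintype κ] (f : F) {w : ι → M} (u : ι → κ → M) (hu : ∀ i, ∑ j, u i j = w i) :
    ∑ i, |f (w i)| ≤ ∑ i, ∑ j, |f (u i j)| :=
  Finset.sum_le_sum fun i _ => hu i ▸ map_sum f (u i) _ ▸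
    Finset.le_sum_of_subadditive _ abs_zero.le abs_add_le _ _

namespace TwoSided

open scoped Pointwise

variable {W X : Type*} [AddCommGroup W] [Lattice W] [Module ℝ W]
  [AddCommGroup X] [Lattice X] [Module ℝ X]

def partitionAbsSums (B : W →ₗ[ℝ] X) (x : W) : Set X :=
  { v | ∃ (n : ℕ) (wi : Fin n → W), (∀ i, 0 ≤ wi i) ∧ (∑ i, wi i = x) ∧ v = ∑ i, |B (wi i)| }

variable {B : W →ₗ[ℝ] X}

theorem sum_abs_mem_partitionAbsSums {ι : Type*} [Fintype ι] {u : ι → W} (hu : ∀ i, 0 ≤ u i)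
    {x : W} (hx : ∑ i, u i = x) : ∑ i, |B (u i)| ∈ partitionAbsSums B x := by
  let e := (Fintype.equivFin ι).symm
  exact ⟨Fintype.card ι, u ∘ e, fun i => hu (e i), (e.sum_comp u).trans hx,
    (e.sum_comp fun i => |B (u i)|).symm⟩

theorem abs_mem_partitionAbsSums {x : W} (hx : 0 ≤ x) : |B x| ∈ partitionAbsSums B x := by
  simpa using sum_abs_mem_partitionAbsSums (B := B) (u := fun _ : Unit => x) (fun _ => hx) (by simp)

theorem add_mem_partitionAbsSums {x y : W} {p q : X} (hp : p ∈ partitionAbsSums B x)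
    (hq : q ∈ partitionAbsSums B y) : p + q ∈ partitionAbsSums B (x + y) := by
  obtain ⟨n, w, hw, rfl, rfl⟩ := hp
  obtain ⟨m, v, hv, rfl, rfl⟩ := hq
  simpa using sum_abs_mem_partitionAbsSums (B := B) (u := Sum.elim w v) (Sum.rec hw hv)
    (Fintype.sum_sum_type _)

section Lattice

variable [IsOrderedAddMonoid W] [IsOrderedAddMonoid X]

theorem directedOn_partitionAbsSums (x : W) : DirectedOn (· ≤ ·) (partitionAbsSums B x) := by
  rintro _ ⟨n, w, hw, hw_sum, rfl⟩ _ ⟨m, v, hv, hv_sum, rfl⟩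
  obtain ⟨u, hu, hu_row, hu_col⟩ := exists_refinement hw hv (hw_sum.trans hv_sum.symm)
  refine ⟨_, sum_abs_mem_partitionAbsSums (B := B) (u := fun p : Fin n × Fin m => u p.1 p.2)
    (fun p => hu p.1 p.2) ?_, ?_, ?_⟩
  · simp only [Fintype.sum_prod_type, hu_row, hw_sum]
  · rw [Fintype.sum_prod_type]
    exact sum_abs_map_le_sum_sum_abs_map B u hu_row
  · rw [Fintype.sum_prod_type, Finset.sum_comm]
    exact sum_abs_map_le_sum_sum_abs_map B (fun j i => u i j) hu_col

theorem exists_le_add_of_mem_partitionAbsSums_add {x y : W} (hx : 0 ≤ x) (hy : 0 ≤ y)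
    {v : X} (hv : v ∈ partitionAbsSums B (x + y)) :
    ∃ p ∈ partitionAbsSums B x, ∃ q ∈ partitionAbsSums B y, v ≤ p + q := by
  obtain ⟨n, w, hw, hw_sum, rfl⟩ := hv
  obtain ⟨u, hu, hu_row, hu_col⟩ := exists_refinement (v := ![x, y]) hw
    (Fin.forall_fin_two.2 ⟨hx, hy⟩) (by simp [hw_sum])
  refine ⟨_, sum_abs_mem_partitionAbsSums (fun i => hu i 0) (hu_col 0),
    _, sum_abs_mem_partitionAbsSums (fun i => hu i 1) (hu_col 1), ?_⟩
  simpa [Fin.sum_univ_two, Finset.sum_add_distrib] using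
    sum_abs_map_le_sum_sum_abs_map B u hu_row

theorem isLUB_partitionAbsSums_add {x y : W} {a b : X} (hx : 0 ≤ x) (hy : 0 ≤ y)
    (ha : IsLUB (partitionAbsSums B x) a) (hb : IsLUB (partitionAbsSums B y) b) :
    IsLUB (partitionAbsSums B (x + y)) (a + b) := by
  refine ⟨fun v hv => ?_, fun c hc => ?_⟩
  · obtain ⟨p, hp, q, hq, hv⟩ := exists_le_add_of_mem_partitionAbsSums_add hx hy hv
    exact hv.trans (add_le_add (ha.1 hp) (hb.1 hq))
  · have hbc : b ≤ c - a := hb.2 fun q hq => le_sub_comm.1 <|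
      ha.2 fun p hp => le_sub_iff_add_le.2 (hc (add_mem_partitionAbsSums hp hq))
    exact le_sub_iff_add_le'.1 hbc

end Lattice

section Smul

variable [PosSMulMono ℝ W] [PosSMulMono ℝ X]

theorem smul_mem_partitionAbsSums {c : ℝ} (hc : 0 ≤ c) {x : W} {v : X}
    (hv : v ∈ partitionAbsSums B x) : c • v ∈ partitionAbsSums B (c • x) := by
  obtain ⟨n, w, hw, rfl, rfl⟩ := hv
  simpa [Finset.smul_sum, abs_smul_of_nonneg hc] using
    sum_abs_mem_partitionAbsSums (B := B) (fun i => smul_nonneg hc (hw i)) (Finset.smul_sum ..).symm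

theorem partitionAbsSums_smul {c : ℝ} (hc : 0 < c) (x : W) :
    partitionAbsSums B (c • x) = c • partitionAbsSums B x := by
  refine Subset.antisymm (fun v hv => ⟨c⁻¹ • v, ?_, smul_inv_smul₀ hc.ne' v⟩) ?_
  · simpa [inv_smul_smul₀ hc.ne'] using smul_mem_partitionAbsSums (inv_nonneg.2 hc.le) hv
  · rintro _ ⟨v, hv, rfl⟩
    exact smul_mem_partitionAbsSums hc.le hv

theorem isLUB_partitionAbsSums_smul {c : ℝ} (hc : 0 < c) {x : W} {a : X}
    (ha : IsLUB (partitionAbsSums B x) a) : IsLUB (partitionAbsSums B (c • x)) (c • a) := by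
  rw [partitionAbsSums_smul hc, ← Set.image_smul]
  exact (OrderIso.smulRight hc).isLUB_image'.2 ha

end Smul

section Modulus

variable [IsOrderedAddMonoid X] {M : W →ₗ[ℝ] X}

theorem IsModulus.abs_apply_le (hM : IsModulus B M) {x : W} (hx : 0 ≤ x) : |B x| ≤ M x :=
  abs_le'.2 ⟨sub_nonneg.1 (hM.1 x hx), sub_nonneg.1 (hM.2.1 x hx)⟩

theorem IsModulus.mem_upperBounds_partitionAbsSums (hM : IsModulus B M) {x : W} :
    M x ∈ upperBounds (partitionAbsSums B x) := by
  rintro _ ⟨n, w, hw, rfl, rfl⟩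
  rw [map_sum]
  exact Finset.sum_le_sum fun i _ => hM.abs_apply_le (hw i)

theorem IsModulus.isLUB_partitionAbsSums [IsOrderedAddMonoid W] [PosSMulMono ℝ W]
    [PosSMulMono ℝ X] (hX : DedekindComplete X) (hM : IsModulus B M) {w : W} (hw : 0 ≤ w) :
    IsLUB (partitionAbsSums B w) (M w) := by
  have hsup : ∀ x : W, ∃ a : X, 0 ≤ x → IsLUB (partitionAbsSums B x) a := by
    intro x
    by_cases hx : 0 ≤ x
    · obtain ⟨a, ha⟩ := hX _ ⟨_, abs_mem_partitionAbsSums hx⟩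
        ⟨M x, hM.mem_upperBounds_partitionAbsSums⟩
      exact ⟨a, fun _ => ha⟩
    · exact ⟨0, fun h => absurd h hx⟩
  choose f hf using hsup
  obtain ⟨U, hU⟩ := exists_linearMap_eq_of_nonneg (f := f)
    (fun x y hx hy => (hf _ (add_nonneg hx hy)).unique
      (isLUB_partitionAbsSums_add hx hy (hf x hx) (hf y hy)))
    (fun c hc x hx =>
      (hf _ (smul_nonneg hc.le hx)).unique (isLUB_partitionAbsSums_smul hc (hf x hx)))
  have hBU : ∀ x, 0 ≤ x → |B x| ≤ U x := fun x hx =>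
    hU x hx ▸ (hf x hx).1 (abs_mem_partitionAbsSums hx)
  have hMU : M w ≤ U w := sub_nonneg.1 <| hM.2.2 U
    (fun x hx => sub_nonneg.2 ((le_abs_self _).trans (hBU x hx)))
    (fun x hx => sub_nonneg.2 ((neg_le_abs _).trans (hBU x hx))) w hw
  exact ⟨hM.mem_upperBounds_partitionAbsSums, fun c hc => hMU.trans (hU w hw ▸ (hf w hw).2 hc)⟩

end Modulus

end TwoSided

open TwoSided in
theorem statement8_general {W X : Type*}
    [AddCommGroup W] [Lattice W] [CovariantClass W W (· + ·) (· ≤ ·)]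
    [Module ℝ W] [PosSMulMono ℝ W]
    [AddCommGroup X] [Lattice X] [CovariantClass X X (· + ·) (· ≤ ·)]
    [Module ℝ X] [PosSMulMono ℝ X]
    (hX : DedekindComplete X)
    (B : W →ₗ[ℝ] X)
    (absB : W →ₗ[ℝ] X) (habsB : IsModulus B absB)
    (w : W) (hw : 0 ≤ w) :
    DirectedOn (· ≤ ·)
      { v : X | ∃ (n : ℕ) (wi : Fin n → W),
        (∀ i, 0 ≤ wi i) ∧ (∑ i, wi i = w) ∧ v = ∑ i, |B (wi i)| } ∧
    IsLUB
      { v : X | ∃ (n : ℕ) (wi : Fin n → W),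
        (∀ i, 0 ≤ wi i) ∧ (∑ i, wi i = w) ∧ v = ∑ i, |B (wi i)| }
      (absB w) := by
  have : IsOrderedAddMonoid W := { add_le_add_left := fun _ _ h c => add_le_add_left h c }
  have : IsOrderedAddMonoid X := { add_le_add_left := fun _ _ h c => add_le_add_left h c }
  exact ⟨directedOn_partitionAbsSums w, habsB.isLUB_partitionAbsSums hX hw⟩

open TwoSided in
theorem statement8 {W X : Type*}
    [AddCommGroup W] [Lattice W] [CovariantClass W W (· + ·) (· ≤ ·)]
    [Module ℝ W] [PosSMulMono ℝ W]
    [AddCommGroup X] [Lattice X] [CovariantClass X X (· + ·) (· ≤ ·)]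
    [Module ℝ X] [PosSMulMono ℝ X]
    (hX : DedekindComplete X)
    (B : W →ₗ[ℝ] X) (hB : IsRegular B)
    (absB : W →ₗ[ℝ] X) (habsB : IsModulus B absB)
    (w : W) (hw : 0 ≤ w) :
    DirectedOn (· ≤ ·)
      { v : X | ∃ (n : ℕ) (wi : Fin n → W),
        (∀ i, 0 ≤ wi i) ∧ (∑ i, wi i = w) ∧ v = ∑ i, |B (wi i)| } ∧
    IsLUB
      { v : X | ∃ (n : ℕ) (wi : Fin n → W),
        (∀ i, 0 ≤ wi i) ∧ (∑ i, wi i = w) ∧ v = ∑ i, |B (wi i)| }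
      (absB w) :=
  statement8_general hX B absB habsB w hw
end

section
/- Let E = ℓ∞ with strong unit e = (1,1,...), and let f be a positive singular Riesz homomorphism functional on ℓ∞ with f(e) = 1 (e.g., a limit along a free ultrafilter). Let B = f ⊗ e ∈ L^r(ℓ∞) (i.e., Bx = f(x)e) and let I be the identity on ℓ∞. Then I ∧ B = 0 in L^r(ℓ∞). -/
open Set Filter

namespace TwoSided

/-- The Banach lattice `ℓ∞` of bounded real sequences. -/
abbrev Linf : Type := BoundedContinuousFunction ℕ ℝ

/-- The strong unit `e = (1,1,…)` of `ℓ∞`. -/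
noncomputable def unitE : Linf := 1

/-- A functional is a Riesz homomorphism if it preserves finite suprema. -/
def RieszHomFun {E : Type*} [AddCommGroup E] [Lattice E] [Module ℝ E]
    (f : E →ₗ[ℝ] ℝ) : Prop :=
  ∀ x y : E, f (x ⊔ y) = max (f x) (f y)

/-- A functional is σ-order continuous if it maps sequences decreasing to `0`
to null sequences. -/
def SigmaOrderContinuous {E : Type*} [AddCommGroup E] [Lattice E] [Module ℝ E]
    (g : E →ₗ[ℝ] ℝ) : Prop :=
  ∀ a : ℕ → E, Antitone a → IsGLB (Set.range a) 0 →
    Filter.Tendsto (fun n => g (a n)) Filter.atTop (nhds 0)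

/-- A positive functional is singular if it is disjoint from every positive
σ-order continuous functional. -/
def IsSingular {E : Type*} [AddCommGroup E] [Lattice E] [Module ℝ E]
    (f : E →ₗ[ℝ] ℝ) : Prop :=
  ∀ g : E →ₗ[ℝ] ℝ, Positive g → SigmaOrderContinuous g → IsOpInf f g 0

end TwoSided


namespace TwoSided

/-- The indicator of the coordinate `n` as an element of `ℓ∞`. -/
noncomputable def indic (n : ℕ) : Linf :=
  BoundedContinuousFunction.ofNormedAddCommGroupDiscrete
    (fun m => if m = n then (1:ℝ) else 0) 1 (by intro m; dsimp; split <;> simp)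

@[simp] lemma indic_apply (n m : ℕ) : indic n m = if m = n then (1:ℝ) else 0 := rfl

/-- Evaluation at coordinate `n` as a linear functional on `ℓ∞`. -/
noncomputable def delta (n : ℕ) : Linf →ₗ[ℝ] ℝ where
  toFun x := x n
  map_add' _ _ := rfl
  map_smul' _ _ := rfl

@[simp] lemma delta_apply (n : ℕ) (x : Linf) : delta n x = x n := rfl

lemma delta_positive (n : ℕ) : Positive (delta n) := fun x hx => hx n

lemma delta_sigmaOrderContinuous (n : ℕ) : SigmaOrderContinuous (delta n) := by
  intro a ha hglb
  have h0 : ∀ k, (0:Linf) ≤ a k := fun k => hglb.1 ⟨k, rfl⟩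
  have anti' : Antitone (fun k => a k n) := fun i j hij => ha hij n
  have hbdd : BddBelow (Set.range fun k => a k n) := by
    refine ⟨0, ?_⟩
    rintro _ ⟨k, rfl⟩
    exact h0 k n
  have htend : Filter.Tendsto (fun k => a k n) Filter.atTop (nhds (⨅ k, a k n)) :=
    tendsto_atTop_ciInf anti' hbdd
  have hinf : (⨅ k, a k n) = 0 := by
    have hge : (0:ℝ) ≤ ⨅ k, a k n := le_ciInf fun k => h0 k n
    rcases lt_or_eq_of_le hge with hlt | heq
    · exfalso
      set ε : ℝ := ⨅ k, a k n with hε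
      have hlb : (ε • indic n : Linf) ∈ lowerBounds (Set.range a) := by
        rintro _ ⟨k, rfl⟩
        intro m
        by_cases hm : m = n
        · subst hm
          have : ε ≤ a k m := ciInf_le hbdd k
          simpa using this
        · simpa [hm] using h0 k m
      have hle : (ε • indic n : Linf) ≤ 0 := hglb.2 hlb
      have := hle n
      simp at this
      exact absurd this (not_le.mpr hlt)
    · exact heq.symm
  simpa [delta_apply, hinf] using htend

lemma le_unitE_indic (n : ℕ) : indic n ≤ unitE := by
  intro m
  by_cases hm : m = n <;> simp [hm, unitE]

lemma f_indic_eq_zero (f : Linf →ₗ[ℝ] ℝ) (hfpos : Positive f) (hfsing : IsSingular f)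
    (hfe : f unitE = 1) (n : ℕ) : f (indic n) = 0 := by
  have hd := hfsing (delta n) (delta_positive n) (delta_sigmaOrderContinuous n)
  set c : ℝ := f (indic n) with hc
  have hc0 : 0 ≤ c := hfpos _ (by intro m; by_cases hm : m = n <;> simp [hm])
  have hc1 : c ≤ 1 := by
    have := hfpos (unitE - indic n) (by simpa [sub_nonneg] using le_unitE_indic n)
    have h' : 0 ≤ f unitE - f (indic n) := by simpa [map_sub] using this
    linarith [hfe ▸ h']
  have hV1 : Positive (f - c • delta n) := by
    intro x hx
    have hle : (x n • indic n : Linf) ≤ x := by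
      intro m
      by_cases hm : m = n
      · subst hm; simp
      · simpa [hm] using hx m
    have := hfpos (x - x n • indic n) (by simpa [sub_nonneg] using hle)
    have h' : 0 ≤ f x - x n * c := by
      simpa [map_sub, map_smul, smul_eq_mul, hc] using this
    simpa [smul_eq_mul, mul_comm] using h'
  have hV2 : Positive (delta n - c • delta n) := by
    intro x hx
    have hxn : (0:ℝ) ≤ x n := hx n
    simp only [LinearMap.sub_apply, LinearMap.smul_apply, delta_apply, smul_eq_mul]
    nlinarith
  have hfin := hd.2.2 (c • delta n) hV1 hV2
  have := hfin unitE (by intro m; simp [unitE])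
  have h1 : c * unitE n ≤ 0 := by simpa [smul_eq_mul] using this
  have : c ≤ 0 := by simpa [unitE] using h1
  linarith

end TwoSided

open TwoSided in
theorem statement11 (f : Linf →ₗ[ℝ] ℝ)
    (hfpos : Positive f) (hfsing : IsSingular f) (hfhom : RieszHomFun f)
    (hfe : f unitE = 1) :
    IsOpInf LinearMap.id (f.smulRight unitE) 0 := by
  refine ⟨?_, ?_, ?_⟩
  · intro x hx
    simpa using hx
  · intro x hx
    have hfx : 0 ≤ f x := hfpos x hx
    intro m
    simpa [unitE, LinearMap.smulRight_apply] using hfx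
  · intro V hVI hVB x hx
    intro n
    set y : Linf := x - x n • indic n with hy
    have hy0 : (0:Linf) ≤ y := by
      intro m
      by_cases hm : m = n
      · subst hm; simp [hy]
      · simpa [hy, hm] using hx m
    have h1 : V y ≤ y := by
      have := hVI y hy0
      simpa [sub_nonneg] using this
    have h2 : V (x n • indic n) ≤ (0:Linf) := by
      have hpos : (0:Linf) ≤ x n • indic n := by
        intro m
        by_cases hm : m = n
        · subst hm; simpa using hx m
        · simp [hm]
      have hz : (f.smulRight unitE) (x n • indic n) = 0 := by
        have h0 : f (indic n) = 0 := f_indic_eq_zero f hfpos hfsing hfe n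
        simp [LinearMap.smulRight_apply, map_smul, h0]
      have h' := hVB (x n • indic n) hpos
      rw [LinearMap.sub_apply, hz, zero_sub] at h'
      simpa [neg_nonneg] using h'
    have hxsplit : x = y + x n • indic n := by simp [hy]
    have hVx : V x = V y + V (x n • indic n) := by
      conv_lhs => rw [hxsplit]
      simp [map_add]
    have hle : (V x) n ≤ 0 := by
      have := add_le_add (h1 n) (h2 n)
      rw [hVx]
      calc (V y + V (x n • indic n)) n = V y n + V (x n • indic n) n := rfl
        _ ≤ y n + 0 := add_le_add (h1 n) (h2 n)
        _ = 0 := by simp [hy]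
    simpa using hle
end

section
/- Let e = (1,1,...) ∈ ℓ∞ and let f be a positive singular Riesz homomorphism on ℓ∞ with f(e) = 1. Let B = f ⊗ e and I the identity on ℓ∞. Then for every positive regular operator T on ℓ∞, (M_{I,I} ∧ M_{I,B})(T)(e) = inf { Tx : 0 ≤ x ≤ e, x ∧ (e − x) = 0, f(x) = 1 }, where the infimum on the right is over all components x of e with f(x) = 1. -/
open Set Filter

set_option maxSynthPendingDepth 5

section Statement12Aux

open TwoSided BoundedContinuousFunction Pointwise

open scoped Classical

namespace TwoSidedAux

/-- The set of components of `unitE` on which `f` equals `1`. -/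
def K (f : Linf →ₗ[ℝ] ℝ) : Set Linf :=
  {x | 0 ≤ x ∧ x ≤ unitE ∧ x ⊓ (unitE - x) = 0 ∧ f x = 1}

lemma pos_apply {P : Linf →ₗ[ℝ] Linf} (hP : Positive P) {x : Linf} (hx : 0 ≤ x) (n : ℕ) :
    (0:ℝ) ≤ P x n := hP x hx n

lemma pos_add {P Q : Linf →ₗ[ℝ] Linf} (hP : Positive P) (hQ : Positive Q) :
    Positive (P + Q) := by
  intro x hx n
  have h1 : (0:ℝ) ≤ P x n := hP x hx n
  have h2 : (0:ℝ) ≤ Q x n := hQ x hx n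
  show (0:ℝ) ≤ P x n + Q x n
  linarith

lemma pos_smul {P : Linf →ₗ[ℝ] Linf} (hP : Positive P) {c : ℝ} (hc : 0 ≤ c) :
    Positive (c • P) := by
  intro x hx n
  have h1 : (0:ℝ) ≤ P x n := hP x hx n
  show (0:ℝ) ≤ c * P x n
  exact mul_nonneg hc h1

lemma pos_zero : Positive (0 : Linf →ₗ[ℝ] Linf) := fun x _ => le_refl _

lemma unitE_nonneg : (0 : Linf) ≤ unitE := fun _ => zero_le_one

lemma f_mono {f : Linf →ₗ[ℝ] ℝ} (hf : Positive f) {x y : Linf} (h : x ≤ y) :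
    f x ≤ f y := by
  have h0 : 0 ≤ y - x := by
    intro n
    have hxy : x n ≤ y n := h n
    show (0:ℝ) ≤ y n - x n
    linarith
  have := hf _ h0
  rw [map_sub] at this; linarith

lemma pos_mono {P : Linf →ₗ[ℝ] Linf} (hP : Positive P) {x y : Linf} (h : x ≤ y) :
    P x ≤ P y := by
  have h0 : 0 ≤ y - x := by
    intro n
    have hxy : x n ≤ y n := h n
    show (0:ℝ) ≤ y n - x n
    linarith
  have h1 := hP _ h0
  intro n
  have h2 : (0:ℝ) ≤ P (y - x) n := h1 n
  have h3 : P (y - x) = P y - P x := map_sub P y x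
  rw [h3] at h2
  have h4 : (0:ℝ) ≤ P y n - P x n := h2
  show P x n ≤ P y n
  linarith

lemma f_inf {f : Linf →ₗ[ℝ] ℝ} (hf : RieszHomFun f) (x y : Linf) :
    f (x ⊓ y) = min (f x) (f y) := by
  have h1 : (x ⊓ y) + (x ⊔ y) = x + y := inf_add_sup x y
  have h2 : f (x ⊓ y) + f (x ⊔ y) = f x + f y := by rw [← map_add, h1, map_add]
  have h3 : f (x ⊔ y) = max (f x) (f y) := hf x y
  have h4 : min (f x) (f y) + max (f x) (f y) = f x + f y := inf_add_sup _ _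
  linarith

lemma f_component_01 {f : Linf →ₗ[ℝ] ℝ} (hfhom : RieszHomFun f)
    (hfe : f unitE = 1) {x : Linf} (hc : x ⊓ (unitE - x) = 0) :
    f x = 0 ∨ f x = 1 := by
  have h1 : f x + f (unitE - x) = 1 := by
    rw [← map_add]
    have : x + (unitE - x) = unitE := by abel
    rw [this, hfe]
  have h2 : min (f x) (f (unitE - x)) = 0 := by
    rw [← f_inf hfhom, hc, map_zero]
  rcases le_total (f x) (f (unitE - x)) with h | h
  · left; rw [min_eq_left h] at h2; exact h2
  · right; rw [min_eq_right h] at h2; linarith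

lemma unitE_mem_K {f : Linf →ₗ[ℝ] ℝ} (hfe : f unitE = 1) : unitE ∈ K f := by
  refine ⟨unitE_nonneg, le_refl _, ?_, hfe⟩
  have h : unitE - unitE = (0 : Linf) := sub_self _
  rw [h]
  exact inf_eq_right.mpr unitE_nonneg

lemma mem_K_apply {f : Linf →ₗ[ℝ] ℝ} {x : Linf} (hx : x ∈ K f) (n : ℕ) :
    x n = 0 ∨ x n = 1 := by
  have h := congrArg (fun v : Linf => v n) hx.2.2.1
  have h' : min (x n) (1 - x n) = 0 := h
  rcases le_total (x n) (1 - x n) with hh | hh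
  · left; rw [min_eq_left hh] at h'; exact h'
  · right; rw [min_eq_right hh] at h'; linarith

lemma inf_mem_K {f : Linf →ₗ[ℝ] ℝ} (hfhom : RieszHomFun f) {x y : Linf}
    (hx : x ∈ K f) (hy : y ∈ K f) : x ⊓ y ∈ K f := by
  refine ⟨le_inf hx.1 hy.1, inf_le_of_left_le hx.2.1, ?_, ?_⟩
  · apply le_antisymm
    · intro n
      have hxn := mem_K_apply hx n
      have hyn := mem_K_apply hy n
      show min (min (x n) (y n)) (1 - min (x n) (y n)) ≤ 0
      rcases hxn with h1 | h1 <;> rcases hyn with h2 | h2 <;> rw [h1, h2] <;> norm_num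
    · intro n
      have h0x : (0:ℝ) ≤ x n := hx.1 n
      have h0y : (0:ℝ) ≤ y n := hy.1 n
      have h1x : x n ≤ 1 := hx.2.1 n
      have h1y : y n ≤ 1 := hy.2.1 n
      show (0:ℝ) ≤ min (min (x n) (y n)) (1 - min (x n) (y n))
      apply le_min (le_min h0x h0y)
      rcases le_total (x n) (y n) with h | h
      · rw [min_eq_left h]; linarith
      · rw [min_eq_right h]; linarith
  · rw [f_inf hfhom, hx.2.2.2, hy.2.2.2]; norm_num

/-- The key approximation: any `0 ≤ w` dominates `(f w - ε)` times some member of `K f`. -/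
lemma approx {f : Linf →ₗ[ℝ] ℝ} (hfpos : Positive f) (hfhom : RieszHomFun f)
    (hfe : f unitE = 1) {w : Linf} (hw : 0 ≤ w) {ε : ℝ} (hε : 0 < ε) :
    ∃ x ∈ K f, (f w - ε) • x ≤ w := by
  classical
  set A : Set ℕ := {n | f w - ε ≤ w n} with hA
  set x : Linf := BoundedContinuousFunction.ofNormedAddCommGroupDiscrete
    (Set.indicator A 1) 1 (by
      intro n
      by_cases h : n ∈ A <;> simp [Set.indicator, h]) with hxdef
  have hxval : ∀ n, x n = if n ∈ A then (1:ℝ) else 0 := by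
    intro n
    by_cases h : n ∈ A <;> simp [hxdef, Set.indicator, h]
  have hx01 : ∀ n, x n = 0 ∨ x n = 1 := by
    intro n; rw [hxval n]; by_cases h : n ∈ A <;> simp [h]
  have hx0 : 0 ≤ x := by
    intro n
    show (0:ℝ) ≤ x n
    rcases hx01 n with h | h <;> rw [h] <;> norm_num
  have hx1 : x ≤ unitE := by
    intro n
    show x n ≤ (1:ℝ)
    rcases hx01 n with h | h <;> rw [h] <;> norm_num
  have hxc : x ⊓ (unitE - x) = 0 := by
    apply le_antisymm
    · intro n
      show min (x n) (1 - x n) ≤ 0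
      rcases hx01 n with h | h <;> rw [h] <;> norm_num
    · intro n
      show (0:ℝ) ≤ min (x n) (1 - x n)
      rcases hx01 n with h | h <;> rw [h] <;> norm_num
  have hfx : f x = 1 := by
    rcases f_component_01 hfhom hfe hxc with h0 | h1
    · exfalso
      have hfy : f (unitE - x) = 1 := by
        rw [map_sub, hfe, h0]; norm_num
      have hble : w ≤ (f w - ε) • (unitE - x) + ‖w‖ • x := by
        intro n
        show w n ≤ (f w - ε) * (1 - x n) + ‖w‖ * x n
        by_cases h : n ∈ A
        · have hx1' : x n = 1 := by rw [hxval n, if_pos h]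
          have hwn : w n ≤ ‖w‖ := (le_abs_self _).trans (w.norm_coe_le_norm n)
          rw [hx1']; ring_nf; linarith
        · have hx0' : x n = 0 := by rw [hxval n, if_neg h]
          have hwn : w n < f w - ε := by
            have h2 := h; rw [hA] at h2
            simp only [Set.mem_setOf_eq, not_le] at h2
            exact h2
          rw [hx0']; ring_nf; linarith
      have hcon := f_mono hfpos hble
      rw [map_add, map_smul, map_smul, hfy, h0] at hcon
      simp only [smul_eq_mul, mul_one, mul_zero, add_zero] at hcon
      linarith
    · exact h1
  refine ⟨x, ⟨hx0, hx1, hxc, hfx⟩, ?_⟩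
  intro n
  show (f w - ε) * x n ≤ w n
  by_cases h : n ∈ A
  · have hx1' : x n = 1 := by rw [hxval n, if_pos h]
    have hwn : f w - ε ≤ w n := h
    rw [hx1']; linarith
  · have hx0' : x n = 0 := by rw [hxval n, if_neg h]
    have hwn : (0:ℝ) ≤ w n := hw n
    rw [hx0']; linarith

/-- The set of values `(P x) n` as `x` ranges over `K f`. -/
def Sset (f : Linf →ₗ[ℝ] ℝ) (P : Linf →ₗ[ℝ] Linf) (n : ℕ) : Set ℝ :=
  (fun x => P x n) '' K f

lemma Sset_nonempty {f : Linf →ₗ[ℝ] ℝ} (hfe : f unitE = 1) (P : Linf →ₗ[ℝ] Linf) (n : ℕ) :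
    (Sset f P n).Nonempty :=
  ⟨P unitE n, ⟨unitE, unitE_mem_K hfe, rfl⟩⟩

lemma Sset_bddBelow {f : Linf →ₗ[ℝ] ℝ} {P : Linf →ₗ[ℝ] Linf} (hP : Positive P) (n : ℕ) :
    BddBelow (Sset f P n) := by
  refine ⟨0, ?_⟩
  rintro t ⟨x, hx, rfl⟩
  exact pos_apply hP hx.1 n

/-- `uf f P`: the pointwise infimum of `P x` over `x ∈ K f`, for positive `P`. -/
noncomputable def uf (f : Linf →ₗ[ℝ] ℝ) (P : Linf →ₗ[ℝ] Linf) : Linf :=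
  if h : Positive P ∧ f unitE = 1 then
    BoundedContinuousFunction.ofNormedAddCommGroupDiscrete
      (fun n => sInf (Sset f P n)) ‖P unitE‖ (by
        intro n
        rw [Real.norm_eq_abs, abs_le]
        constructor
        · have h0 : (0:ℝ) ≤ sInf (Sset f P n) :=
            le_csInf (Sset_nonempty h.2 P n) (by rintro t ⟨x, hx, rfl⟩; exact pos_apply h.1 hx.1 n)
          have : (0:ℝ) ≤ ‖P unitE‖ := norm_nonneg _
          linarith
        · have h1 : sInf (Sset f P n) ≤ P unitE n :=
            csInf_le (Sset_bddBelow h.1 n) ⟨unitE, unitE_mem_K h.2, rfl⟩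
          exact h1.trans ((le_abs_self _).trans ((P unitE).norm_coe_le_norm n)))
  else 0

lemma uf_apply {f : Linf →ₗ[ℝ] ℝ} {P : Linf →ₗ[ℝ] Linf} (hP : Positive P)
    (hfe : f unitE = 1) (n : ℕ) : uf f P n = sInf (Sset f P n) := by
  unfold uf
  rw [dif_pos (⟨hP, hfe⟩ : Positive P ∧ f unitE = 1)]
  rfl

lemma uf_add {f : Linf →ₗ[ℝ] ℝ} (hfhom : RieszHomFun f) (hfe : f unitE = 1)
    {P Q : Linf →ₗ[ℝ] Linf} (hP : Positive P) (hQ : Positive Q) :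
    uf f (P + Q) = uf f P + uf f Q := by
  have hPQ : Positive (P + Q) := pos_add hP hQ
  ext n
  show uf f (P + Q) n = uf f P n + uf f Q n
  rw [uf_apply hPQ hfe, uf_apply hP hfe, uf_apply hQ hfe]
  apply le_antisymm
  · have H : ∀ x ∈ K f, ∀ y ∈ K f, sInf (Sset f (P + Q) n) ≤ P x n + Q y n := by
      intro x hx y hy
      have hz : x ⊓ y ∈ K f := inf_mem_K hfhom hx hy
      have h1 : sInf (Sset f (P + Q) n) ≤ (P + Q) (x ⊓ y) n :=
        csInf_le (Sset_bddBelow hPQ n) ⟨x ⊓ y, hz, rfl⟩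
      have h2 : P (x ⊓ y) n ≤ P x n := pos_mono hP inf_le_left n
      have h3 : Q (x ⊓ y) n ≤ Q y n := pos_mono hQ inf_le_right n
      have h4 : (P + Q) (x ⊓ y) n = P (x ⊓ y) n + Q (x ⊓ y) n := rfl
      linarith
    have H1 : sInf (Sset f (P + Q) n) - sInf (Sset f Q n) ≤ sInf (Sset f P n) := by
      apply le_csInf (Sset_nonempty hfe P n)
      rintro s ⟨x, hx, rfl⟩
      have H2 : sInf (Sset f (P + Q) n) - P x n ≤ sInf (Sset f Q n) := by
        apply le_csInf (Sset_nonempty hfe Q n)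
        rintro t ⟨y, hy, rfl⟩
        have := H x hx y hy
        linarith
      linarith
    linarith
  · apply le_csInf (Sset_nonempty hfe (P + Q) n)
    rintro t ⟨x, hx, rfl⟩
    have h1 : sInf (Sset f P n) ≤ P x n := csInf_le (Sset_bddBelow hP n) ⟨x, hx, rfl⟩
    have h2 : sInf (Sset f Q n) ≤ Q x n := csInf_le (Sset_bddBelow hQ n) ⟨x, hx, rfl⟩
    have h4 : (P + Q) x n = P x n + Q x n := rfl
    linarith

lemma uf_smul {f : Linf →ₗ[ℝ] ℝ} (hfe : f unitE = 1)
    {P : Linf →ₗ[ℝ] Linf} (hP : Positive P) {c : ℝ} (hc : 0 ≤ c) :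
    uf f (c • P) = c • uf f P := by
  have hcP : Positive (c • P) := pos_smul hP hc
  ext n
  show uf f (c • P) n = c * uf f P n
  rw [uf_apply hcP hfe, uf_apply hP hfe]
  have himg : Sset f (c • P) n = c • Sset f P n := by
    rw [← Set.image_smul]
    unfold Sset
    rw [Set.image_image]
    rfl
  rw [himg, Real.sInf_smul_of_nonneg hc, smul_eq_mul]

lemma uf_zero {f : Linf →ₗ[ℝ] ℝ} (hfe : f unitE = 1) : uf f (0 : Linf →ₗ[ℝ] Linf) = 0 := by
  ext n
  show uf f 0 n = (0:ℝ)
  rw [uf_apply pos_zero hfe]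
  have h : Sset f 0 n = {0} := by
    apply Set.eq_singleton_iff_nonempty_unique_mem.mpr
    refine ⟨Sset_nonempty hfe 0 n, ?_⟩
    rintro t ⟨x, _, rfl⟩
    rfl
  rw [h, csInf_singleton]

/-- The submodule of regular operators. -/
noncomputable def Reg : Submodule ℝ (Linf →ₗ[ℝ] Linf) where
  carrier := {T | ∃ P Q, Positive P ∧ Positive Q ∧ T = P - Q}
  add_mem' := by
    rintro S T ⟨P, Q, hP, hQ, rfl⟩ ⟨P', Q', hP', hQ', rfl⟩
    exact ⟨P + P', Q + Q', pos_add hP hP', pos_add hQ hQ', by abel⟩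
  zero_mem' := ⟨0, 0, pos_zero, pos_zero, by abel⟩
  smul_mem' := by
    rintro c T ⟨P, Q, hP, hQ, rfl⟩
    rcases le_or_gt 0 c with hc | hc
    · exact ⟨c • P, c • Q, pos_smul hP hc, pos_smul hQ hc, by module⟩
    · exact ⟨(-c) • Q, (-c) • P, pos_smul hQ (by linarith), pos_smul hP (by linarith), by module⟩

noncomputable def gf (f : Linf →ₗ[ℝ] ℝ) (T : Linf →ₗ[ℝ] Linf) : Linf :=
  if h : ∃ P Q, Positive P ∧ Positive Q ∧ T = P - Q then
    uf f h.choose - uf f h.choose_spec.choose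
  else 0

lemma gf_eq {f : Linf →ₗ[ℝ] ℝ} (hfhom : RieszHomFun f) (hfe : f unitE = 1)
    {T P Q : Linf →ₗ[ℝ] Linf} (hP : Positive P) (hQ : Positive Q) (hT : T = P - Q) :
    gf f T = uf f P - uf f Q := by
  have h : ∃ P Q, Positive P ∧ Positive Q ∧ T = P - Q := ⟨P, Q, hP, hQ, hT⟩
  rw [gf, dif_pos h]
  set P₀ := h.choose
  set Q₀ := h.choose_spec.choose
  obtain ⟨hP₀, hQ₀, hT₀⟩ := h.choose_spec.choose_spec
  have key : P₀ + Q = P + Q₀ := by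
    have hsub : P₀ - Q₀ = P - Q := by rw [← hT₀, ← hT]
    have h2 : P₀ - Q₀ + (Q₀ + Q) = P - Q + (Q₀ + Q) := by rw [hsub]
    have h3 : P₀ + Q = P₀ - Q₀ + (Q₀ + Q) := by abel
    have h4 : P + Q₀ = P - Q + (Q₀ + Q) := by abel
    rw [h3, h2, ← h4]
  have h3 : uf f P₀ + uf f Q = uf f P + uf f Q₀ := by
    rw [← uf_add hfhom hfe hP₀ hQ, ← uf_add hfhom hfe hP hQ₀, key]
  have h5 : uf f P₀ - uf f Q₀ = uf f P₀ + uf f Q - (uf f Q + uf f Q₀) := by abel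
  rw [h5, h3]
  abel

lemma gf_pos {f : Linf →ₗ[ℝ] ℝ} (hfhom : RieszHomFun f) (hfe : f unitE = 1)
    {P : Linf →ₗ[ℝ] Linf} (hP : Positive P) : gf f P = uf f P := by
  rw [gf_eq hfhom hfe hP pos_zero (by abel), uf_zero hfe, sub_zero]

/-- `gf` as a linear map on the submodule of regular operators. -/
noncomputable def U0 (f : Linf →ₗ[ℝ] ℝ) (hfhom : RieszHomFun f) (hfe : f unitE = 1) :
    Reg →ₗ[ℝ] Linf where
  toFun t := gf f t.val
  map_add' := by
    rintro ⟨S, P, Q, hP, hQ, rfl⟩ ⟨S', P', Q', hP', hQ', rfl⟩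
    show gf f ((P - Q) + (P' - Q')) = gf f (P - Q) + gf f (P' - Q')
    rw [gf_eq hfhom hfe hP hQ rfl, gf_eq hfhom hfe hP' hQ' rfl,
      gf_eq hfhom hfe (pos_add hP hP') (pos_add hQ hQ') (by abel),
      uf_add hfhom hfe hP hP', uf_add hfhom hfe hQ hQ']
    abel
  map_smul' := by
    rintro c ⟨S, P, Q, hP, hQ, rfl⟩
    show gf f (c • (P - Q)) = c • gf f (P - Q)
    rw [gf_eq hfhom hfe hP hQ rfl]
    rcases le_or_gt 0 c with hc | hc
    · rw [gf_eq hfhom hfe (pos_smul hP hc) (pos_smul hQ hc) (by module),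
        uf_smul hfe hP hc, uf_smul hfe hQ hc, smul_sub]
    · have hc' : (0:ℝ) ≤ -c := by linarith
      rw [gf_eq hfhom hfe (pos_smul hQ hc') (pos_smul hP hc')
          (by module),
        uf_smul hfe hP hc', uf_smul hfe hQ hc']
      module

/-- A complement of the regular operators. -/
noncomputable def RegCompl : Submodule ℝ (Linf →ₗ[ℝ] Linf) := by
  exact Classical.choose (Submodule.exists_isCompl (V := Linf →ₗ[ℝ] Linf) Reg)

lemma RegCompl_isCompl : IsCompl Reg RegCompl := by
  exact Classical.choose_spec (Submodule.exists_isCompl (V := Linf →ₗ[ℝ] Linf) Reg)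

/-- Extension of `uf` to a linear map on all operators, via a complement of `Reg`. -/
noncomputable def Uext (f : Linf →ₗ[ℝ] ℝ) (hfhom : RieszHomFun f) (hfe : f unitE = 1) :
    (Linf →ₗ[ℝ] Linf) →ₗ[ℝ] Linf := by
  exact (U0 f hfhom hfe).comp
    (Submodule.linearProjOfIsCompl (E := Linf →ₗ[ℝ] Linf) Reg RegCompl RegCompl_isCompl)

lemma Uext_pos {f : Linf →ₗ[ℝ] ℝ} (hfhom : RieszHomFun f) (hfe : f unitE = 1)
    {P : Linf →ₗ[ℝ] Linf} (hP : Positive P) : Uext f hfhom hfe P = uf f P := by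
  have hmem : P ∈ Reg := ⟨P, 0, hP, pos_zero, by abel⟩
  unfold Uext
  rw [LinearMap.comp_apply]
  have hproj : Submodule.linearProjOfIsCompl (E := Linf →ₗ[ℝ] Linf) Reg RegCompl
      RegCompl_isCompl P = ⟨P, hmem⟩ := by
    exact Submodule.linearProjOfIsCompl_apply_left (E := Linf →ₗ[ℝ] Linf)
      RegCompl_isCompl ⟨P, hmem⟩
  rw [hproj]
  exact gf_pos hfhom hfe hP

/-- The candidate lower bound `Ξ : T ↦ f ⊗ (Uext T)`. -/
noncomputable def Xi (f : Linf →ₗ[ℝ] ℝ) (hfhom : RieszHomFun f) (hfe : f unitE = 1) :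
    (Linf →ₗ[ℝ] Linf) →ₗ[ℝ] (Linf →ₗ[ℝ] Linf) where
  toFun T := f.smulRight (Uext f hfhom hfe T)
  map_add' S T := by
    refine LinearMap.ext fun w => ?_
    show f.smulRight (Uext f hfhom hfe (S + T)) w
      = (f.smulRight (Uext f hfhom hfe S) + f.smulRight (Uext f hfhom hfe T)) w
    rw [LinearMap.add_apply, LinearMap.smulRight_apply, LinearMap.smulRight_apply,
      LinearMap.smulRight_apply, map_add, smul_add]
  map_smul' c T := by
    refine LinearMap.ext fun w => ?_
    show f.smulRight (Uext f hfhom hfe (c • T)) w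
      = ((RingHom.id ℝ) c • f.smulRight (Uext f hfhom hfe T)) w
    rw [RingHom.id_apply, LinearMap.smul_apply, LinearMap.smulRight_apply,
      LinearMap.smulRight_apply, map_smul, smul_comm]

lemma Xi_apply (f : Linf →ₗ[ℝ] ℝ) (hfhom : RieszHomFun f) (hfe : f unitE = 1)
    (T : Linf →ₗ[ℝ] Linf) (w : Linf) :
    Xi f hfhom hfe T w = f w • Uext f hfhom hfe T := rfl

/-- The main estimate: `f w • uf f P ≤ P w` for positive `P` and `0 ≤ w`. -/
lemma key_est {f : Linf →ₗ[ℝ] ℝ} (hfpos : Positive f) (hfhom : RieszHomFun f)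
    (hfe : f unitE = 1) {P : Linf →ₗ[ℝ] Linf} (hP : Positive P)
    {w : Linf} (hw : 0 ≤ w) : f w • uf f P ≤ P w := by
  intro n
  show f w * uf f P n ≤ P w n
  have hc : 0 ≤ f w := hfpos w hw
  set i := uf f P n with hi
  have hi0 : 0 ≤ i := by
    rw [hi, uf_apply hP hfe]
    exact le_csInf (Sset_nonempty hfe P n) (by rintro t ⟨x, hx, rfl⟩; exact pos_apply hP hx.1 n)
  have hiPe : i ≤ P unitE n := by
    rw [hi, uf_apply hP hfe]
    exact csInf_le (Sset_bddBelow hP n) ⟨unitE, unitE_mem_K hfe, rfl⟩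
  have hPe0 : (0:ℝ) ≤ P unitE n := pos_apply hP unitE_nonneg n
  have hPw0 : (0:ℝ) ≤ P w n := pos_apply hP hw n
  have main : ∀ ε : ℝ, 0 < ε → f w * i ≤ P w n + ε * P unitE n := by
    intro ε hε
    rcases le_or_gt (f w) ε with h | h
    · have hmm : f w * i ≤ ε * P unitE n := mul_le_mul h hiPe hi0 (hc.trans h)
      linarith
    · obtain ⟨x, hx, hle⟩ := approx hfpos hfhom hfe hw hε
      have h2 : P ((f w - ε) • x) ≤ P w := pos_mono hP hle
      have h3 : P ((f w - ε) • x) n = (f w - ε) * P x n := by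
        rw [map_smul]; rfl
      have h4 : i ≤ P x n := by
        rw [hi, uf_apply hP hfe]
        exact csInf_le (Sset_bddBelow hP n) ⟨x, hx, rfl⟩
      have h5 : (f w - ε) * i ≤ (f w - ε) * P x n :=
        mul_le_mul_of_nonneg_left h4 (by linarith)
      have h6 : P ((f w - ε) • x) n ≤ P w n := h2 n
      rw [h3] at h6
      have h7 : ε * i ≤ ε * P unitE n :=
        mul_le_mul_of_nonneg_left hiPe (le_of_lt hε)
      nlinarith
  by_contra hcon
  push_neg at hcon
  set d := f w * i - P w n with hd
  have hd0 : 0 < d := by rw [hd]; linarith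
  have := main (d / (P unitE n + 1)) (by positivity)
  have hlt : d / (P unitE n + 1) * P unitE n < d := by
    rw [div_mul_eq_mul_div, div_lt_iff₀ (by linarith)]
    nlinarith
  linarith

lemma Xi_lb_id {f : Linf →ₗ[ℝ] ℝ} (hfpos : Positive f) (hfhom : RieszHomFun f)
    (hfe : f unitE = 1) :
    Positive2 (MAB (LinearMap.id : Linf →ₗ[ℝ] Linf) (LinearMap.id : Linf →ₗ[ℝ] Linf) - Xi f hfhom hfe) := by
  intro P hP w hw
  have h1 : (MAB (LinearMap.id : Linf →ₗ[ℝ] Linf) (LinearMap.id : Linf →ₗ[ℝ] Linf) - Xi f hfhom hfe) P w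
      = P w - f w • uf f P := by
    simp only [LinearMap.sub_apply, MAB, LinearMap.coe_mk, AddHom.coe_mk,
      LinearMap.comp_apply, LinearMap.id_apply, Xi_apply, Uext_pos hfhom hfe hP]
  rw [h1]
  intro n
  show (0:ℝ) ≤ P w n - f w * uf f P n
  have h2 : f w * uf f P n ≤ P w n := key_est hfpos hfhom hfe hP hw n
  linarith

lemma Xi_lb_B {f : Linf →ₗ[ℝ] ℝ} (hfpos : Positive f) (hfhom : RieszHomFun f)
    (hfe : f unitE = 1) :
    Positive2 (MAB (LinearMap.id : Linf →ₗ[ℝ] Linf) (f.smulRight unitE) - Xi f hfhom hfe) := by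
  intro P hP w hw
  have h1 : (MAB (LinearMap.id : Linf →ₗ[ℝ] Linf) (f.smulRight unitE) - Xi f hfhom hfe) P w
      = f w • P unitE - f w • uf f P := by
    simp only [LinearMap.sub_apply, MAB, LinearMap.coe_mk, AddHom.coe_mk,
      LinearMap.comp_apply, LinearMap.id_apply, LinearMap.smulRight_apply,
      Xi_apply, Uext_pos hfhom hfe hP, map_smul]
  rw [h1]
  intro n
  show (0:ℝ) ≤ f w * P unitE n - f w * uf f P n
  have hc : 0 ≤ f w := hfpos w hw
  have hiPe : uf f P n ≤ P unitE n := by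
    rw [uf_apply hP hfe]
    exact csInf_le (Sset_bddBelow hP n) ⟨unitE, unitE_mem_K hfe, rfl⟩
  nlinarith

end TwoSidedAux

end Statement12Aux
open TwoSidedAux in
open TwoSided in
theorem statement12 (f : Linf →ₗ[ℝ] ℝ)
    (hfpos : Positive f) (hfsing : IsSingular f) (hfhom : RieszHomFun f)
    (hfe : f unitE = 1)
    (T : Linf →ₗ[ℝ] Linf) (hT : Positive T)
    (Θ : (Linf →ₗ[ℝ] Linf) →ₗ[ℝ] (Linf →ₗ[ℝ] Linf))
    (hΘ : IsOpInf2 (MAB LinearMap.id LinearMap.id)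
      (MAB LinearMap.id (f.smulRight unitE)) Θ) :
    IsGLB {v : Linf | ∃ x : Linf, 0 ≤ x ∧ x ≤ unitE ∧ x ⊓ (unitE - x) = 0 ∧
      f x = 1 ∧ v = T x} (Θ T unitE) := by
  classical
  constructor
  · -- Θ T unitE is a lower bound
    rintro v ⟨x, hx0, hxe, hxc, hfx, rfl⟩
    have hex : 0 ≤ unitE - x := by
      intro n
      have := hxe n
      show (0:ℝ) ≤ unitE n - x n
      have h1 : x n ≤ 1 := this
      have h2 : unitE n = 1 := rfl
      linarith
    have h1 := hΘ.1 T hT x hx0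
    have h2 := hΘ.2.1 T hT (unitE - x) hex
    have e1 : ((MAB (LinearMap.id : Linf →ₗ[ℝ] Linf) (LinearMap.id : Linf →ₗ[ℝ] Linf) - Θ) T) x
        = T x - Θ T x := by
      simp only [LinearMap.sub_apply, MAB, LinearMap.coe_mk, AddHom.coe_mk,
        LinearMap.comp_apply, LinearMap.id_apply]
    have e2 : ((MAB (LinearMap.id : Linf →ₗ[ℝ] Linf) (f.smulRight unitE) - Θ) T) (unitE - x)
        = f (unitE - x) • T unitE - Θ T (unitE - x) := by
      simp only [LinearMap.sub_apply, MAB, LinearMap.coe_mk, AddHom.coe_mk,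
        LinearMap.comp_apply, LinearMap.id_apply, LinearMap.smulRight_apply, map_smul]
    have hf0 : f (unitE - x) = 0 := by rw [map_sub, hfe, hfx]; ring
    rw [e1] at h1
    rw [e2, hf0, zero_smul, zero_sub] at h2
    have hsplit : Θ T unitE = Θ T x + Θ T (unitE - x) := by
      rw [← map_add]
      congr 1
      abel
    intro n
    have ha : (0:ℝ) ≤ T x n - Θ T x n := h1 n
    have hb2 : (0:ℝ) ≤ -(Θ T (unitE - x) n) := h2 n
    have hs : Θ T unitE n = Θ T x n + Θ T (unitE - x) n :=
      congrArg (fun v : Linf => v n) hsplit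
    show Θ T unitE n ≤ T x n
    linarith
  · -- it is the greatest lower bound
    intro b hb
    have hΞ1 := Xi_lb_id hfpos hfhom hfe
    have hΞ2 := Xi_lb_B hfpos hfhom hfe
    have h3 := hΘ.2.2 (Xi f hfhom hfe) hΞ1 hΞ2 T hT unitE (fun n => zero_le_one)
    have e3 : ((Θ - Xi f hfhom hfe) T) unitE = Θ T unitE - uf f T := by
      simp only [LinearMap.sub_apply, Xi_apply, Uext_pos hfhom hfe hT, hfe, one_smul]
    rw [e3] at h3
    have hbu : b ≤ uf f T := by
      intro n
      show b n ≤ uf f T n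
      rw [uf_apply hT hfe]
      apply le_csInf (Sset_nonempty hfe T n)
      rintro t ⟨x, hx, rfl⟩
      have hmem : T x ∈ {v : Linf | ∃ x : Linf, 0 ≤ x ∧ x ≤ unitE ∧
          x ⊓ (unitE - x) = 0 ∧ f x = 1 ∧ v = T x} :=
        ⟨x, hx.1, hx.2.1, hx.2.2.1, hx.2.2.2, rfl⟩
      exact hb hmem n
    intro n
    have h3n : (0:ℝ) ≤ Θ T unitE n - uf f T n := h3 n
    have hbn : b n ≤ uf f T n := hbu n
    show b n ≤ Θ T unitE n
    linarith
end

section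
/- Let W, X, Y, Z be Dedekind complete Riesz spaces. For every A ∈ L^r(Y,Z) and B ∈ L^r(W,X), the two-sided multiplication operator M_{A,B} : L^r(X,Y) → L^r(W,Z), T ↦ A∘T∘B, is a regular operator, and if A ≥ 0 and B ≥ 0 then M_{A,B} ≥ 0; moreover |M_{A,B}| ≤ M_{|A|,|B|}. -/
open Set Filter

open TwoSided in
theorem statement15 {W X Y Z : Type*}
    [AddCommGroup W] [Lattice W] [CovariantClass W W (· + ·) (· ≤ ·)]
    [Module ℝ W] [PosSMulMono ℝ W]
    [AddCommGroup X] [Lattice X] [CovariantClass X X (· + ·) (· ≤ ·)]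
    [Module ℝ X] [PosSMulMono ℝ X]
    [AddCommGroup Y] [Lattice Y] [CovariantClass Y Y (· + ·) (· ≤ ·)]
    [Module ℝ Y] [PosSMulMono ℝ Y]
    [AddCommGroup Z] [Lattice Z] [CovariantClass Z Z (· + ·) (· ≤ ·)]
    [Module ℝ Z] [PosSMulMono ℝ Z]
    (hW : DedekindComplete W) (hX : DedekindComplete X)
    (hY : DedekindComplete Y) (hZ : DedekindComplete Z)
    (A : Y →ₗ[ℝ] Z) (hA : IsRegular A) (B : W →ₗ[ℝ] X) (hB : IsRegular B)
    (absA : Y →ₗ[ℝ] Z) (habsA : IsModulus A absA)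
    (absB : W →ₗ[ℝ] X) (habsB : IsModulus B absB) :
    IsRegular2 (MAB A B) ∧
    (Positive A → Positive B → Positive2 (MAB A B)) ∧
    (∀ Θ : (X →ₗ[ℝ] Y) →ₗ[ℝ] (W →ₗ[ℝ] Z), IsModulus2 (MAB A B) Θ →
      Positive2 (MAB absA absB - Θ)) := by

  obtain ⟨hAmA, hApA', _⟩ := habsA
  obtain ⟨hBmB, hBpB', _⟩ := habsB
  have hApA : Positive (absA + A) := by
    intro x hx; simpa [sub_neg_eq_add] using hApA' x hx
  have hBpB : Positive (absB + B) := by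
    intro x hx; simpa [sub_neg_eq_add] using hBpB' x hx
  have key : ∀ (A' : Y →ₗ[ℝ] Z) (B' : W →ₗ[ℝ] X), Positive A' → Positive B' →
      Positive2 (MAB A' B') := by
    intro A' B' hA' hB' T hT w hw
    exact hA' _ (hT _ (hB' _ hw))
  have h1 : Positive2 (MAB absA absB - MAB A B) := by
    intro T hT w hw
    have hx : (0:Z) ≤ (absA + A) (T ((absB - B) w)) := hApA _ (hT _ (hBmB _ hw))
    have hy : (0:Z) ≤ (absA - A) (T ((absB + B) w)) := hAmA _ (hT _ (hBpB _ hw))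
    have heq : ((MAB absA absB - MAB A B) T) w =
        (1/2:ℝ) • ((absA + A) (T ((absB - B) w)) + (absA - A) (T ((absB + B) w))) := by
      simp only [MAB, LinearMap.sub_apply, LinearMap.add_apply, LinearMap.coe_mk,
        AddHom.coe_mk, LinearMap.comp_apply, map_sub, map_add]
      module
    rw [heq]
    exact smul_nonneg (by norm_num) (add_nonneg hx hy)
  have h2 : Positive2 (MAB absA absB + MAB A B) := by
    intro T hT w hw
    have hx : (0:Z) ≤ (absA + A) (T ((absB + B) w)) := hApA _ (hT _ (hBpB _ hw))
    have hy : (0:Z) ≤ (absA - A) (T ((absB - B) w)) := hAmA _ (hT _ (hBmB _ hw))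
    have heq : ((MAB absA absB + MAB A B) T) w =
        (1/2:ℝ) • ((absA + A) (T ((absB + B) w)) + (absA - A) (T ((absB - B) w))) := by
      simp only [MAB, LinearMap.sub_apply, LinearMap.add_apply, LinearMap.coe_mk,
        AddHom.coe_mk, LinearMap.comp_apply, map_sub, map_add]
      module
    rw [heq]
    exact smul_nonneg (by norm_num) (add_nonneg hx hy)
  refine ⟨?_, fun hA' hB' => key A B hA' hB', ?_⟩
  · obtain ⟨P, Q, hP, hQ, hAeq⟩ := hA
    obtain ⟨R, S, hR, hS, hBeq⟩ := hB
    refine ⟨MAB P R + MAB Q S, MAB P S + MAB Q R, ?_, ?_, ?_⟩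
    · intro T hT w hw
      have u1 := key P R hP hR T hT w hw
      have u2 := key Q S hQ hS T hT w hw
      simpa [LinearMap.add_apply] using add_nonneg u1 u2
    · intro T hT w hw
      have u1 := key P S hP hS T hT w hw
      have u2 := key Q R hQ hR T hT w hw
      simpa [LinearMap.add_apply] using add_nonneg u1 u2
    · ext T w
      simp only [hAeq, hBeq, MAB, LinearMap.sub_apply, LinearMap.add_apply,
        LinearMap.coe_mk, AddHom.coe_mk, LinearMap.comp_apply, map_sub, map_add]
      abel
  · intro Θ hΘ
    obtain ⟨_, _, hmin⟩ := hΘ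
    have h2' : Positive2 (MAB absA absB - -(MAB A B)) := by
      rwa [sub_neg_eq_add]
    exact hmin (MAB absA absB) h1 h2'
end
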